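/- arXiv:1807.02427 — 6 statements merged into one kernel-verified Lean document; each statement's English description precedes it below -/
import Mathlib

section
/- For integers 1 < m < n, the minimum edge-cuts of the complete bipartite graph K_{m,n} are exactly the n sets of edges incident to a single vertex in the larger partition class (the class of size n, whose vertices have degree m). Consequently the mincut graph X(K_{m,n}) is isomorphic to the empty graph on n vertices. -/
open SimpleGraph

variable {V : Type*}

/-- `X` is an edge-cut of `G`: a set of edges of `G` whose deletion disconnects `G`. -/
def IsEdgeCut (G : SimpleGraph V) (X : Set (Sym2 V)) : Prop :=
  X ⊆ G.edgeSet ∧ ¬ (G.deleteEdges X).Connected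

/-- `X` is a minimum edge-cut (mincut) of `G`. -/
def IsMinCut (G : SimpleGraph V) (X : Set (Sym2 V)) : Prop :=
  IsEdgeCut G X ∧ ∀ Y : Set (Sym2 V), IsEdgeCut G Y → X.ncard ≤ Y.ncard

/-- The edge connectivity of `G`: minimum cardinality of an edge-cut. -/
noncomputable def edgeConn (G : SimpleGraph V) : ℕ :=
  sInf {n | ∃ X : Set (Sym2 V), IsEdgeCut G X ∧ X.ncard = n}

/-- The mincut graph `X(G)`: intersection graph of the minimum edge-cuts of `G`. -/
def mincutGraph (G : SimpleGraph V) : SimpleGraph {X : Set (Sym2 V) // IsMinCut G X} :=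
  SimpleGraph.fromRel (fun A B => (A.1 ∩ B.1).Nonempty)

lemma reachable_isolated {G : SimpleGraph V} {a b : V}
    (h : G.Reachable a b) (ha : ∀ c, ¬ G.Adj a c) : a = b := by
  obtain ⟨w⟩ := h
  cases w with
  | nil => rfl
  | cons h' _ => exact absurd h' (ha _)

lemma mem_star_iff {m n : ℕ} (v : Fin n) (e : Sym2 (Fin m ⊕ Fin n)) :
    e ∈ (completeBipartiteGraph (Fin m) (Fin n)).incidenceSet (Sum.inr v) ↔
      ∃ u : Fin m, e = s(Sum.inl u, Sum.inr v) := by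
  induction e using Sym2.ind with
  | _ a b =>
    rw [mk'_mem_incidenceSet_iff]
    constructor
    · rintro ⟨he, hv⟩
      rcases a with u | w <;> rcases b with u' | w' <;>
        simp_all [Sym2.eq_iff]
    · rintro ⟨u, he⟩
      rw [Sym2.eq_iff] at he
      rcases he with ⟨ha, hb⟩ | ⟨ha, hb⟩ <;> subst ha <;> subst hb <;> simp

lemma star_ncard {m n : ℕ} (v : Fin n) :
    ((completeBipartiteGraph (Fin m) (Fin n)).incidenceSet (Sum.inr v)).ncard = m := by
  have himg : (completeBipartiteGraph (Fin m) (Fin n)).incidenceSet (Sum.inr v) =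
      (fun u : Fin m => s(Sum.inl u, Sum.inr v)) '' Set.univ := by
    ext e
    rw [mem_star_iff]
    simp [eq_comm]
  rw [himg, Set.ncard_image_of_injective _ (fun a b h => by
    simpa [Sym2.eq_iff] using h), Set.ncard_univ, Nat.card_eq_fintype_card, Fintype.card_fin]

lemma star_is_cut {m n : ℕ} (hm : 0 < m) (v : Fin n) :
    IsEdgeCut (completeBipartiteGraph (Fin m) (Fin n))
      ((completeBipartiteGraph (Fin m) (Fin n)).incidenceSet (Sum.inr v)) := by
  refine ⟨(completeBipartiteGraph (Fin m) (Fin n)).incidenceSet_subset _, fun hc => ?_⟩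
  have h := hc.preconnected (Sum.inr v) (Sum.inl ⟨0, hm⟩)
  have : (Sum.inr v : Fin m ⊕ Fin n) = Sum.inl ⟨0, hm⟩ := by
    refine reachable_isolated h fun c hadj => ?_
    rw [deleteEdges_adj] at hadj
    exact hadj.2 ((mk'_mem_incidenceSet_left_iff _).mpr hadj.1)
  simp at this

lemma conn_criterion {m n : ℕ} {X : Set (Sym2 (Fin m ⊕ Fin n))}
    (hv0 : ∃ v0 : Fin n, ∀ u : Fin m, s(Sum.inl u, Sum.inr v0) ∉ X)
    (hv : ∀ v : Fin n, ∃ u : Fin m, s(Sum.inl u, Sum.inr v) ∉ X) :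
    ((completeBipartiteGraph (Fin m) (Fin n)).deleteEdges X).Connected := by
  obtain ⟨v0, hv0⟩ := hv0
  have key : ∀ a, ((completeBipartiteGraph (Fin m) (Fin n)).deleteEdges X).Reachable a
      (Sum.inr v0) := by
    intro a
    have adjlr : ∀ (u : Fin m) (w : Fin n), s(Sum.inl u, Sum.inr w) ∉ X →
        ((completeBipartiteGraph (Fin m) (Fin n)).deleteEdges X).Adj (Sum.inl u) (Sum.inr w) :=
      fun u w h => by rw [deleteEdges_adj]; exact ⟨by simp, h⟩
    rcases a with u | w
    · exact (adjlr u v0 (hv0 u)).reachable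
    · obtain ⟨u, hu⟩ := hv w
      exact ((adjlr u w hu).symm.reachable).trans (adjlr u v0 (hv0 u)).reachable
  haveI : Nonempty (Fin m ⊕ Fin n) := ⟨Sum.inr v0⟩
  exact ⟨fun a b => (key a).trans (key b).symm⟩

lemma small_cut_is_star {m n : ℕ} (hmn : m < n) {X : Set (Sym2 (Fin m ⊕ Fin n))}
    (hX : X ⊆ (completeBipartiteGraph (Fin m) (Fin n)).edgeSet) (hcard : X.ncard ≤ m)
    (hdisc : ¬ ((completeBipartiteGraph (Fin m) (Fin n)).deleteEdges X).Connected) :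
    ∃ v : Fin n, X = (completeBipartiteGraph (Fin m) (Fin n)).incidenceSet (Sum.inr v) := by
  by_contra hne
  push_neg at hne
  apply hdisc
  apply conn_criterion
  · -- some right vertex has no missing edge
    by_contra h0
    push_neg at h0
    -- h0 : ∀ v0, ∃ u, s(inl u, inr v0) ∈ X
    choose f hf using h0
    have hinj : Function.Injective (fun v : Fin n => s(Sum.inl (f v), Sum.inr v)) := by
      intro a b h
      exact ((by simpa [Sym2.eq_iff] using h : f a = f b ∧ a = b)).2
    have hle : n ≤ X.ncard := by
      have := Set.ncard_le_ncard (t := X)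
        (s := Set.range (fun v : Fin n => s(Sum.inl (f v), Sum.inr v)))
        (by rintro e ⟨v, rfl⟩; exact hf v) (Set.toFinite X)
      rwa [← Set.image_univ, Set.ncard_image_of_injective _ hinj, Set.ncard_univ,
        Nat.card_eq_fintype_card, Fintype.card_fin] at this
    omega
  · intro v
    by_contra h0
    push_neg at h0
    -- then star v ⊆ X, and |star v| = m ≥ |X|, so X = star v
    have hsub : (completeBipartiteGraph (Fin m) (Fin n)).incidenceSet (Sum.inr v) ⊆ X := by
      intro e he
      obtain ⟨u, rfl⟩ := (mem_star_iff v e).mp he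
      exact h0 u
    have := Set.eq_of_subset_of_ncard_le hsub (by rw [star_ncard]; exact hcard) (Set.toFinite X)
    exact hne v this.symm

theorem mincutGraph_completeBipartite (m n : ℕ) (hm : 1 < m) (hmn : m < n) :
    (∀ X : Set (Sym2 (Fin m ⊕ Fin n)),
        IsMinCut (completeBipartiteGraph (Fin m) (Fin n)) X ↔
          ∃ v : Fin n, X = (completeBipartiteGraph (Fin m) (Fin n)).incidenceSet (Sum.inr v)) ∧
      Nonempty (mincutGraph (completeBipartiteGraph (Fin m) (Fin n))
        ≃g (⊥ : SimpleGraph (Fin n))) := by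
  have hm0 : 0 < m := by omega
  have hpart1 : ∀ X : Set (Sym2 (Fin m ⊕ Fin n)),
      IsMinCut (completeBipartiteGraph (Fin m) (Fin n)) X ↔
        ∃ v : Fin n, X = (completeBipartiteGraph (Fin m) (Fin n)).incidenceSet (Sum.inr v) := by
    intro X
    constructor
    · rintro ⟨⟨hXsub, hXdisc⟩, hmin⟩
      have hle : X.ncard ≤ m := by
        have := hmin _ (star_is_cut hm0 (⟨0, by omega⟩ : Fin n))
        rwa [star_ncard] at this
      exact small_cut_is_star hmn hXsub hle hXdisc
    · rintro ⟨v, rfl⟩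
      refine ⟨star_is_cut hm0 v, fun Y hY => ?_⟩
      rw [star_ncard]
      by_contra h
      push_neg at h
      obtain ⟨v', hv'⟩ := small_cut_is_star hmn hY.1 (le_of_lt h) hY.2
      rw [hv', star_ncard] at h
      omega
  refine ⟨hpart1, ?_⟩
  have huniq : ∀ v v' : Fin n,
      (completeBipartiteGraph (Fin m) (Fin n)).incidenceSet (Sum.inr v) =
        (completeBipartiteGraph (Fin m) (Fin n)).incidenceSet (Sum.inr v') → v = v' := by
    intro v v' h
    have hmem : s(Sum.inl (⟨0, hm0⟩ : Fin m), Sum.inr v) ∈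
        (completeBipartiteGraph (Fin m) (Fin n)).incidenceSet (Sum.inr v') := by
      rw [← h]
      exact (mem_star_iff _ _).mpr ⟨_, rfl⟩
    obtain ⟨u, he⟩ := (mem_star_iff _ _).mp hmem
    exact ((by simpa [Sym2.eq_iff] using he : (⟨0, hm0⟩ : Fin m) = u ∧ v = v')).2
  set F : Fin n → {X : Set (Sym2 (Fin m ⊕ Fin n)) //
      IsMinCut (completeBipartiteGraph (Fin m) (Fin n)) X} :=
    fun v => ⟨_, (hpart1 _).mpr ⟨v, rfl⟩⟩ with hF
  have hbij : Function.Bijective F := by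
    constructor
    · intro v v' h
      exact huniq v v' (congrArg Subtype.val h)
    · rintro ⟨X, hX⟩
      obtain ⟨v, hv⟩ := (hpart1 X).mp hX
      exact ⟨v, Subtype.ext hv.symm⟩
  have hadj : ∀ A B, ¬ (mincutGraph (completeBipartiteGraph (Fin m) (Fin n))).Adj A B := by
    intro A B h
    rw [mincutGraph, fromRel_adj] at h
    obtain ⟨hne, h2⟩ := h
    obtain ⟨v, hv⟩ := (hpart1 A.1).mp A.2
    obtain ⟨v', hv'⟩ := (hpart1 B.1).mp B.2
    have hvv : v ≠ v' := fun hh => hne (Subtype.ext (by rw [hv, hv', hh]))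
    have hcommon : ∃ e, e ∈ A.1 ∧ e ∈ B.1 := by
      rcases h2 with ⟨e, he⟩ | ⟨e, he⟩
      · exact ⟨e, he.1, he.2⟩
      · exact ⟨e, he.2, he.1⟩
    obtain ⟨e, heA, heB⟩ := hcommon
    rw [hv] at heA
    rw [hv'] at heB
    obtain ⟨u, rfl⟩ := (mem_star_iff _ _).mp heA
    obtain ⟨u', he⟩ := (mem_star_iff _ _).mp heB
    exact hvv ((by simpa [Sym2.eq_iff] using he : u = u' ∧ v = v')).2
  exact ⟨⟨(Equiv.ofBijective F hbij).symm,
    fun {A B} => iff_of_false (by simp) (hadj A B)⟩⟩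
end

section
/- For n > 4, the minimum edge-cuts of the wheel W_n (with n−1 rim vertices of degree 3 and one hub of degree n−1) are exactly the n−1 sets of three edges incident to a rim vertex, and the mincut graph X(W_n) is isomorphic to the cycle C_{n−1}. -/
/-!
Let `X` be an edge cut of the wheel and `S` the set of rim vertices that `X` separates from the
hub; `S` is nonempty and `X` contains the spoke to every vertex of `S`. If `S = {i}`, then `X`
contains the three edges at `i`. Otherwise `X` contains at least two spokes, and either all of
them (so at least four) or also two rim edges, one leaving `S` clockwise and one entering it.
Hence the rim stars are exactly the minimum cuts, and two of them meet iff their centres are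
adjacent on the rim.
-/

open SimpleGraph

variable {V : Type*}

/-- The wheel graph with `k` rim vertices and a hub (`none`). -/
def wheelGraph (k : Nat) : SimpleGraph (Option (Fin k)) :=
  SimpleGraph.fromRel (fun a b =>
    (a = none ∧ b ≠ none) ∨
      ∃ i j : Fin k, a = some i ∧ b = some j ∧ (SimpleGraph.cycleGraph k).Adj i j)

namespace SimpleGraph

variable {G : SimpleGraph V}

lemma incidenceSet_inter_incidenceSet_nonempty_iff {a b : V} (h : a ≠ b) :
    (G.incidenceSet a ∩ G.incidenceSet b).Nonempty ↔ G.Adj a b :=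
  ⟨fun ⟨_, ha, hb⟩ => G.adj_of_mem_incidenceSet h ha hb, fun hab => by
    rw [G.incidenceSet_inter_incidenceSet_of_adj hab]; exact Set.singleton_nonempty _⟩

lemma mem_of_reachable_of_not_reachable {X : Set (Sym2 V)} {r u v : V} (huv : G.Adj u v)
    (hu : (G.deleteEdges X).Reachable r u) (hv : ¬ (G.deleteEdges X).Reachable r v) :
    s(u, v) ∈ X := by
  by_contra huvX
  exact hv (hu.trans (deleteEdges_adj.2 ⟨huv, huvX⟩).reachable)

end SimpleGraph

section EdgeCut

variable {G : SimpleGraph V}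

lemma isEdgeCut_incidenceSet {v w : V} (h : v ≠ w) : IsEdgeCut G (G.incidenceSet v) := by
  refine ⟨G.incidenceSet_subset v, fun hconn => ?_⟩
  obtain ⟨p⟩ := hconn.preconnected v w
  cases p with
  | nil => exact h rfl
  | cons hadj _ =>
    rw [deleteEdges_adj] at hadj
    exact hadj.2 ((G.mem_incidenceSet _ _).2 hadj.1)

lemma mincutGraph_adj {A B : {X : Set (Sym2 V) // IsMinCut G X}} :
    (mincutGraph G).Adj A B ↔ A ≠ B ∧ (A.1 ∩ B.1).Nonempty := by
  rw [mincutGraph, fromRel_adj, Set.inter_comm B.1, or_self]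

end EdgeCut

open Fin.CommRing in
lemma Fin.exists_mem_add_one_notMem {k : ℕ} [NeZero k] {T : Set (Fin k)} (hT : T.Nonempty)
    (hT' : T ≠ Set.univ) : ∃ x ∈ T, x + 1 ∉ T := by
  by_contra! hclosed
  obtain ⟨a, ha⟩ := hT
  have hshift : ∀ d : ℕ, a + d ∈ T := by
    intro d
    induction d with
    | zero => simpa using ha
    | succ d ih => simpa [add_assoc] using hclosed _ ih
  refine hT' (Set.eq_univ_of_forall fun b => ?_)
  simpa using hshift (b - a).val

open Fin.CommRing in
lemma Fin.add_one_add_one_ne_self {k : ℕ} [NeZero k] (hk : 3 ≤ k) (x : Fin k) :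
    x + 1 + 1 ≠ x := by
  intro h
  have h2 : (2 : Fin k) = 0 := by linear_combination h
  simp [Fin.ext_iff, Nat.mod_eq_of_lt (show 2 < k by omega)] at h2

lemma cycleGraph_adj_add_one {k : ℕ} [NeZero k] (hk : 2 ≤ k) (i : Fin k) :
    (cycleGraph k).Adj i (i + 1) := by
  rw [cycleGraph_adj']
  right
  simp [Nat.mod_eq_of_lt hk]

section Wheel

variable {k : ℕ}

lemma wheelGraph_adj_none_some (i : Fin k) : (wheelGraph k).Adj none (some i) := by
  simp [wheelGraph, fromRel_adj]

lemma wheelGraph_adj_some_some {i j : Fin k} :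
    (wheelGraph k).Adj (some i) (some j) ↔ (cycleGraph k).Adj i j := by
  simp only [wheelGraph, fromRel_adj, ne_eq, Option.some.injEq, reduceCtorEq, false_and,
    exists_and_left, exists_eq_left', false_or]
  exact ⟨fun h => h.2.elim id .symm, fun h => ⟨h.ne, .inl h⟩⟩

lemma wheelGraph_neighborSet_some (i : Fin k) :
    (wheelGraph k).neighborSet (some i) = insert none (some '' (cycleGraph k).neighborSet i) := by
  ext (_ | j)
  · simpa using (wheelGraph_adj_none_some i).symm
  · simp [wheelGraph_adj_some_some]

lemma ncard_incidenceSet_wheelGraph_some (hk : 3 ≤ k) (i : Fin k) :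
    ((wheelGraph k).incidenceSet (some i)).ncard = 3 := by
  obtain ⟨m, rfl⟩ := Nat.exists_eq_add_of_le' hk
  rw [← Nat.card_coe_set_eq, Nat.card_congr ((wheelGraph _).incidenceSetEquivNeighborSet _),
    Nat.card_coe_set_eq, wheelGraph_neighborSet_some, Set.ncard_insert_of_notMem (by simp),
    Set.ncard_image_of_injective _ (Option.some_injective _), ← Nat.card_coe_set_eq,
    Nat.card_eq_fintype_card, card_neighborSet_eq_degree, cycleGraph_degree_three_le]

/-- The rim vertices that `X` separates from the hub. -/
def separatedRim (k : ℕ) (X : Set (Sym2 (Option (Fin k)))) : Set (Fin k) :=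
  {i | ¬ ((wheelGraph k).deleteEdges X).Reachable none (some i)}

variable {X : Set (Sym2 (Option (Fin k)))}

lemma separatedRim_nonempty (hX : IsEdgeCut (wheelGraph k) X) : (separatedRim k X).Nonempty := by
  by_contra! h
  refine hX.2 ((connected_iff_exists_forall_reachable _).2 ⟨none, ?_⟩)
  rintro (_ | i)
  · rfl
  · by_contra hi
    exact (Set.eq_empty_iff_forall_notMem.1 h) i hi

lemma spoke_mem_of_mem_separatedRim {i : Fin k} (hi : i ∈ separatedRim k X) :
    s(none, some i) ∈ X :=
  mem_of_reachable_of_not_reachable (wheelGraph_adj_none_some i) Reachable.rfl hi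

lemma rim_mem_of_mem_separatedRim {i j : Fin k} (hij : (cycleGraph k).Adj i j)
    (hi : i ∉ separatedRim k X) (hj : j ∈ separatedRim k X) : s(some i, some j) ∈ X :=
  mem_of_reachable_of_not_reachable (wheelGraph_adj_some_some.2 hij) (not_not.1 hi) hj

lemma incidenceSet_subset_of_separatedRim_eq_singleton {i : Fin k}
    (h : separatedRim k X = {i}) : (wheelGraph k).incidenceSet (some i) ⊆ X := by
  intro e he
  obtain ⟨w, rfl⟩ := Sym2.mem_iff_exists.1 he.2
  have hadj := ((wheelGraph k).mem_incidenceSet _ _).1 he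
  rw [Sym2.eq_swap]
  rcases w with _ | j
  · exact spoke_mem_of_mem_separatedRim (h ▸ rfl)
  · have hij := wheelGraph_adj_some_some.1 hadj
    exact rim_mem_of_mem_separatedRim hij.symm (by rw [h]; exact hij.ne.symm) (h ▸ rfl)

lemma four_le_ncard_of_one_lt_ncard_separatedRim (hk : 4 ≤ k)
    (hS : 1 < (separatedRim k X).ncard) : 4 ≤ X.ncard := by
  set S := separatedRim k X
  set spokes := (fun i => s(none, some i)) '' S
  have hspokes : spokes ⊆ X := by
    rintro _ ⟨i, hi, rfl⟩
    exact spoke_mem_of_mem_separatedRim hi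
  have hcard : spokes.ncard = S.ncard :=
    Set.ncard_image_of_injective _ fun i j h => by simpa using h
  by_cases hSuniv : S = Set.univ
  · calc 4 ≤ S.ncard := by simpa [hSuniv] using hk
      _ = spokes.ncard := hcard.symm
      _ ≤ X.ncard := Set.ncard_le_ncard hspokes
  have : NeZero k := ⟨by omega⟩
  have hSne : S.Nonempty := Set.nonempty_of_ncard_ne_zero (by omega)
  have hrim_notMem : ∀ a b : Fin k, s(some a, some b) ∉ spokes := by
    rintro a b ⟨i, -, h⟩
    simp at h
  obtain ⟨x, hx, hx1⟩ := Fin.exists_mem_add_one_notMem hSne hSuniv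
  obtain ⟨y, hy, hy1⟩ :=
    Fin.exists_mem_add_one_notMem (Set.nonempty_compl.2 hSuniv) (Set.compl_ne_univ.2 hSne)
  have hxX : s(some (x + 1), some x) ∈ X :=
    rim_mem_of_mem_separatedRim (cycleGraph_adj_add_one (by omega) x).symm hx1 hx
  have hyX : s(some y, some (y + 1)) ∈ X :=
    rim_mem_of_mem_separatedRim (cycleGraph_adj_add_one (by omega) y) hy (not_not.1 hy1)
  have hxy : s(some (x + 1), some x) ≠ s(some y, some (y + 1)) := by
    simp only [ne_eq, Sym2.eq_iff, Option.some.injEq, not_or, not_and]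
    refine ⟨fun hxy hyx => ?_, fun _ hxy => hy (hxy ▸ hx)⟩
    exact Fin.add_one_add_one_ne_self (by omega) x (by rw [hxy, hyx])
  calc 4 ≤ S.ncard + 2 := by omega
    _ = (insert (s(some (x + 1), some x)) (insert (s(some y, some (y + 1))) spokes)).ncard := by
      rw [Set.ncard_insert_of_notMem, Set.ncard_insert_of_notMem (hrim_notMem _ _), hcard]
      simpa [hxy] using hrim_notMem _ _
    _ ≤ X.ncard := Set.ncard_le_ncard (Set.insert_subset hxX (Set.insert_subset hyX hspokes))

lemma exists_incidenceSet_subset_or_four_le_ncard (hk : 4 ≤ k) (hX : IsEdgeCut (wheelGraph k) X) :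
    (∃ i, (wheelGraph k).incidenceSet (some i) ⊆ X) ∨ 4 ≤ X.ncard := by
  obtain hS | hS : (separatedRim k X).ncard = 1 ∨ 1 < (separatedRim k X).ncard := by
    have := (separatedRim_nonempty hX).ncard_pos
    omega
  · obtain ⟨i, hi⟩ := Set.ncard_eq_one.1 hS
    exact .inl ⟨i, incidenceSet_subset_of_separatedRim_eq_singleton hi⟩
  · exact .inr (four_le_ncard_of_one_lt_ncard_separatedRim hk hS)

lemma three_le_ncard_of_isEdgeCut_wheelGraph (hk : 4 ≤ k) (hX : IsEdgeCut (wheelGraph k) X) :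
    3 ≤ X.ncard := by
  rcases exists_incidenceSet_subset_or_four_le_ncard hk hX with ⟨i, hi⟩ | h4
  · exact ncard_incidenceSet_wheelGraph_some (by omega) i ▸ Set.ncard_le_ncard hi
  · omega

lemma isMinCut_wheelGraph_iff (hk : 4 ≤ k) (X : Set (Sym2 (Option (Fin k)))) :
    IsMinCut (wheelGraph k) X ↔ ∃ i, X = (wheelGraph k).incidenceSet (some i) := by
  constructor
  · rintro ⟨hX, hmin⟩
    rcases exists_incidenceSet_subset_or_four_le_ncard hk hX with ⟨i, hi⟩ | h4
    · have hle := hmin _ (isEdgeCut_incidenceSet (Option.some_ne_none i))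
      exact ⟨i, (Set.eq_of_subset_of_ncard_le hi hle).symm⟩
    · have hle := hmin _ (isEdgeCut_incidenceSet (Option.some_ne_none (⟨0, by omega⟩ : Fin k)))
      rw [ncard_incidenceSet_wheelGraph_some (by omega)] at hle
      omega
  · rintro ⟨i, rfl⟩
    refine ⟨isEdgeCut_incidenceSet (Option.some_ne_none i), fun Y hY => ?_⟩
    rw [ncard_incidenceSet_wheelGraph_some (by omega)]
    exact three_le_ncard_of_isEdgeCut_wheelGraph hk hY

lemma wheelGraph_incidenceSet_some_injective :
    Function.Injective fun i : Fin k => (wheelGraph k).incidenceSet (some i) := by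
  intro i j (hij : (wheelGraph k).incidenceSet (some i) = (wheelGraph k).incidenceSet (some j))
  have hspoke : s(none, some i) ∈ (wheelGraph k).incidenceSet (some j) :=
    hij ▸ (wheelGraph k).mk'_mem_incidenceSet_right_iff.2 (wheelGraph_adj_none_some i)
  simpa [eq_comm] using hspoke.2

lemma nonempty_mincutGraph_wheelGraph_iso (hk : 4 ≤ k) :
    Nonempty (mincutGraph (wheelGraph k) ≃g cycleGraph k) := by
  let f : Fin k → {X // IsMinCut (wheelGraph k) X} :=
    fun i => ⟨_, (isMinCut_wheelGraph_iff hk _).2 ⟨i, rfl⟩⟩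
  have hf : Function.Bijective f := by
    refine ⟨fun i j hij => wheelGraph_incidenceSet_some_injective (congrArg Subtype.val hij),
      fun X => ?_⟩
    obtain ⟨i, hi⟩ := (isMinCut_wheelGraph_iff hk X.1).1 X.2
    exact ⟨i, Subtype.ext hi.symm⟩
  have hadj : ∀ i j, (mincutGraph (wheelGraph k)).Adj (f i) (f j) ↔ (cycleGraph k).Adj i j := by
    intro i j
    rw [mincutGraph_adj, hf.injective.ne_iff]
    refine ⟨fun ⟨hij, h⟩ => ?_, fun h => ⟨h.ne, ?_⟩⟩
    · exact wheelGraph_adj_some_some.1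
        ((incidenceSet_inter_incidenceSet_nonempty_iff ((Option.some_injective _).ne hij)).1 h)
    · exact (incidenceSet_inter_incidenceSet_nonempty_iff ((Option.some_injective _).ne h.ne)).2
        (wheelGraph_adj_some_some.2 h)
  exact ⟨(⟨Equiv.ofBijective f hf, hadj _ _⟩ : cycleGraph k ≃g _).symm⟩

end Wheel

theorem mincutGraph_wheel (n : ℕ) (hn : 4 < n) :
    (∀ X : Set (Sym2 (Option (Fin (n - 1)))), IsMinCut (wheelGraph (n - 1)) X ↔
        ∃ i : Fin (n - 1), X = (wheelGraph (n - 1)).incidenceSet (some i)) ∧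
      Nonempty (mincutGraph (wheelGraph (n - 1)) ≃g SimpleGraph.cycleGraph (n - 1)) :=
  ⟨isMinCut_wheelGraph_iff (by omega), nonempty_mincutGraph_wheelGraph_iso (by omega)⟩
end

section
/- For n > 2, the complete bipartite graph K_{n,n} is super-λ: its edge connectivity is n and its minimum edge-cuts are exactly the 2n sets of edges incident to a single vertex. Consequently X(K_{n,n}) ≅ K_{n,n}. -/
open SimpleGraph

variable {V : Type*}

namespace KnnAux

variable {n : ℕ}

/-- The map sending `(i,j)` to the edge between `inl i` and `inr j`. -/
def emb (n : ℕ) (p : Fin n × Fin n) : Sym2 (Fin n ⊕ Fin n) := s(Sum.inl p.1, Sum.inr p.2)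

lemma emb_inj : Function.Injective (emb n) := by
  rintro ⟨i, j⟩ ⟨i', j'⟩ h
  simp only [emb, Sym2.eq_iff] at h
  rcases h with ⟨h1, h2⟩ | ⟨h1, h2⟩
  · simp_all
  · simp_all

lemma mem_edgeSet_iff (e : Sym2 (Fin n ⊕ Fin n)) :
    e ∈ (completeBipartiteGraph (Fin n) (Fin n)).edgeSet ↔ ∃ p : Fin n × Fin n, emb n p = e := by
  induction e using Sym2.ind with
  | _ x y =>
    cases x <;> cases y <;>
      simp [emb, Sym2.eq_iff, Prod.exists, eq_comm]

lemma incidence_left (i : Fin n) :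
    (completeBipartiteGraph (Fin n) (Fin n)).incidenceSet (Sum.inl i)
      = emb n '' {p | p.1 = i} := by
  ext e
  simp only [incidenceSet, Set.mem_sep_iff, mem_edgeSet_iff, Set.mem_image, Set.mem_setOf_eq]
  constructor
  · rintro ⟨⟨⟨a, b⟩, rfl⟩, hm⟩
    simp only [emb, Sym2.mem_iff] at hm
    rcases hm with h | h
    · exact ⟨(a, b), by simpa using h.symm, rfl⟩
    · exact absurd h (by simp)
  · rintro ⟨⟨a, b⟩, ha, rfl⟩
    simp only [Set.mem_setOf_eq] at ha
    subst ha
    exact ⟨⟨(a, b), rfl⟩, by simp [emb]⟩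

lemma incidence_right (j : Fin n) :
    (completeBipartiteGraph (Fin n) (Fin n)).incidenceSet (Sum.inr j)
      = emb n '' {p | p.2 = j} := by
  ext e
  simp only [incidenceSet, Set.mem_sep_iff, mem_edgeSet_iff, Set.mem_image, Set.mem_setOf_eq]
  constructor
  · rintro ⟨⟨⟨a, b⟩, rfl⟩, hm⟩
    simp only [emb, Sym2.mem_iff] at hm
    rcases hm with h | h
    · exact absurd h (by simp)
    · exact ⟨(a, b), by simpa using h.symm, rfl⟩
  · rintro ⟨⟨a, b⟩, ha, rfl⟩
    simp only [Set.mem_setOf_eq] at ha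
    subst ha
    exact ⟨⟨(a, b), rfl⟩, by simp [emb]⟩

lemma ncard_sprod {α β : Type*} (s : Set α) (t : Set β) :
    (s ×ˢ t).ncard = s.ncard * t.ncard := by
  rw [← Nat.card_coe_set_eq, ← Nat.card_coe_set_eq, ← Nat.card_coe_set_eq,
    Nat.card_congr (Equiv.Set.prod s t), Nat.card_prod]

lemma ncard_fiber_left (i : Fin n) : ({p : Fin n × Fin n | p.1 = i}).ncard = n := by
  have : {p : Fin n × Fin n | p.1 = i} = ({i} : Set (Fin n)) ×ˢ (Set.univ) := by
    ext ⟨a, b⟩; simp [eq_comm]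
  rw [this, ncard_sprod, Set.ncard_singleton, Set.ncard_univ, Nat.card_eq_fintype_card,
    Fintype.card_fin, one_mul]

lemma ncard_fiber_right (j : Fin n) : ({p : Fin n × Fin n | p.2 = j}).ncard = n := by
  have : {p : Fin n × Fin n | p.2 = j} = (Set.univ : Set (Fin n)) ×ˢ ({j} : Set (Fin n)) := by
    ext ⟨a, b⟩; simp [eq_comm]
  rw [this, ncard_sprod, Set.ncard_singleton, Set.ncard_univ, Nat.card_eq_fintype_card,
    Fintype.card_fin, mul_one]

lemma ncard_incidence (v : Fin n ⊕ Fin n) :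
    ((completeBipartiteGraph (Fin n) (Fin n)).incidenceSet v).ncard = n := by
  cases v with
  | inl i =>
    rw [incidence_left, Set.ncard_image_of_injective _ emb_inj, ncard_fiber_left]
  | inr j =>
    rw [incidence_right, Set.ncard_image_of_injective _ emb_inj, ncard_fiber_right]

lemma incidence_isEdgeCut (hn : 0 < n) (v : Fin n ⊕ Fin n) :
    IsEdgeCut (completeBipartiteGraph (Fin n) (Fin n))
      ((completeBipartiteGraph (Fin n) (Fin n)).incidenceSet v) := by
  refine ⟨(completeBipartiteGraph (Fin n) (Fin n)).incidenceSet_subset v, ?_⟩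
  intro hc
  obtain ⟨w, hvw⟩ : ∃ w : Fin n ⊕ Fin n, v ≠ w := by
    cases v with
    | inl i => exact ⟨Sum.inr i, by simp⟩
    | inr j => exact ⟨Sum.inl j, by simp⟩
  obtain ⟨p⟩ := hc.preconnected v w
  cases p with
  | nil => exact hvw rfl
  | cons h q =>
    rw [SimpleGraph.deleteEdges_adj] at h
    exact h.2 ⟨SimpleGraph.mem_edgeSet _ |>.mpr h.1, Sym2.mem_mk_left _ _⟩

/-- The core arithmetic inequality. -/
lemma arith (a b c d : ℕ) (hn : 2 < n) (hac : a + c = n) (hbd : b + d = n)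
    (h1 : 1 ≤ a ∨ 1 ≤ b) (h2 : 1 ≤ c ∨ 1 ≤ d) :
    n ≤ a * d + c * b ∧ (a * d + c * b = n →
      (a = 1 ∧ b = 0) ∨ (a = 0 ∧ b = 1) ∨ (a = n ∧ d = 1) ∨ (c = 1 ∧ b = n)) := by
  rcases Nat.eq_zero_or_pos a with ha | ha
  · -- a = 0, so c = n, and b ≥ 1
    have hb : 1 ≤ b := by omega
    subst ha
    have hc : c = n := by omega
    constructor
    · calc n = n * 1 := (mul_one n).symm
        _ ≤ c * b := by apply Nat.mul_le_mul <;> omega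
        _ ≤ 0 * d + c * b := by omega
    · intro h
      right; left
      constructor
      · rfl
      · nlinarith
  rcases Nat.eq_zero_or_pos c with hc | hc
  · -- c = 0, a = n, need d ≥ 1
    have hd : 1 ≤ d := by omega
    have ha' : a = n := by omega
    subst hc
    constructor
    · calc n = n * 1 := (mul_one n).symm
        _ ≤ a * d := by apply Nat.mul_le_mul <;> omega
        _ ≤ a * d + 0 * b := by omega
    · intro h
      right; right; left
      refine ⟨ha', ?_⟩
      nlinarith
  rcases Nat.eq_zero_or_pos b with hb | hb
  · -- b = 0, d = n, a ≥ 1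
    have ha' : 1 ≤ a := by omega
    subst hb
    have hd : d = n := by omega
    constructor
    · calc n = 1 * n := (one_mul n).symm
        _ ≤ a * d := by apply Nat.mul_le_mul <;> omega
        _ ≤ a * d + c * 0 := by omega
    · intro h
      left
      refine ⟨?_, rfl⟩
      nlinarith
  rcases Nat.eq_zero_or_pos d with hd | hd
  · -- d = 0, b = n, c ≥ 1
    have hb' : b = n := by omega
    subst hd
    constructor
    · calc n = 1 * n := (one_mul n).symm
        _ ≤ c * b := by apply Nat.mul_le_mul <;> omega
        _ ≤ a * 0 + c * b := by omega
    · intro h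
      right; right; right
      refine ⟨?_, hb'⟩
      nlinarith
  -- interior case: all of a,b,c,d ≥ 1; strict inequality
  have hstrict : n + 1 ≤ a * d + c * b := by
    rcases Nat.lt_or_ge a 2 with ha2 | ha2
    · -- a = 1, so c = n - 1 ≥ 2
      have ha1 : a = 1 := by omega
      have hc2 : 2 ≤ c := by omega
      calc n + 1 = d + (b + 1) := by omega
        _ ≤ a * d + (2 * b) := by
            rw [ha1, one_mul]
            have : b + 1 ≤ 2 * b := by omega
            omega
        _ ≤ a * d + c * b := by
            have : 2 * b ≤ c * b := Nat.mul_le_mul_right b hc2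
            omega
    · -- a ≥ 2
      calc n + 1 = (d + 1) + b := by omega
        _ ≤ 2 * d + c * b := by
            have h2d : d + 1 ≤ 2 * d := by omega
            have hcb : b ≤ c * b := Nat.le_mul_of_pos_left b hc
            omega
        _ ≤ a * d + c * b := by
            have : 2 * d ≤ a * d := Nat.mul_le_mul_right d ha2
            omega
  exact ⟨by omega, by omega⟩

section Main

local notation "G" => completeBipartiteGraph (Fin n) (Fin n)

/-- The crossing-pair set of a vertex set `S`. -/
def P (S : Set (Fin n ⊕ Fin n)) : Set (Fin n × Fin n) :=
  {p | ¬ (Sum.inl p.1 ∈ S ↔ Sum.inr p.2 ∈ S)}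

/-- The crossing edge set of a vertex set `S`. -/
def cross (S : Set (Fin n ⊕ Fin n)) : Set (Sym2 (Fin n ⊕ Fin n)) := emb n '' P S

lemma cut_lower (hn : 2 < n) (Y : Set (Sym2 (Fin n ⊕ Fin n))) (hY : IsEdgeCut G Y) :
    n ≤ Y.ncard ∧ (Y.ncard ≤ n → ∃ v, Y = (G).incidenceSet v) := by
  obtain ⟨hsub, hdis⟩ := hY
  have hne : Nonempty (Fin n ⊕ Fin n) := ⟨Sum.inl ⟨0, by omega⟩⟩
  have hnp : ¬ ((G).deleteEdges Y).Preconnected := fun h =>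
    hdis ((SimpleGraph.connected_iff _).mpr ⟨h, hne⟩)
  rw [SimpleGraph.Preconnected] at hnp
  push_neg at hnp
  obtain ⟨v, w, hvw⟩ := hnp
  set S : Set (Fin n ⊕ Fin n) := {u | ((G).deleteEdges Y).Reachable v u} with hS
  have hvS : v ∈ S := SimpleGraph.Reachable.refl v
  have hwS : w ∉ S := hvw
  have hcross : cross S ⊆ Y := by
    rintro e ⟨⟨i, j⟩, hp, rfl⟩
    by_contra he
    have hadj : ((G).deleteEdges Y).Adj (Sum.inl i) (Sum.inr j) := by
      rw [SimpleGraph.deleteEdges_adj]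
      exact ⟨by simp, he⟩
    exact hp ⟨fun h => h.trans hadj.reachable, fun h => h.trans hadj.symm.reachable⟩
  set A : Set (Fin n) := {i | Sum.inl i ∈ S} with hA
  set B : Set (Fin n) := {j | Sum.inr j ∈ S} with hB
  have hPeq : P S = (A ×ˢ Bᶜ) ∪ (Aᶜ ×ˢ B) := by
    ext ⟨i, j⟩
    simp only [P, Set.mem_setOf_eq, Set.mem_union, Set.mem_prod, Set.mem_compl_iff, hA, hB]
    tauto
  have hdisj : Disjoint (A ×ˢ Bᶜ) (Aᶜ ×ˢ B) := by
    rw [Set.disjoint_left]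
    rintro ⟨i, j⟩ ⟨hi, hj⟩ ⟨hi', hj'⟩
    exact hi' hi
  have hcount : (cross S).ncard = A.ncard * Bᶜ.ncard + Aᶜ.ncard * B.ncard := by
    rw [cross, Set.ncard_image_of_injective _ emb_inj, hPeq,
      Set.ncard_union_eq hdisj (Set.toFinite _) (Set.toFinite _), ncard_sprod, ncard_sprod]
  have hAc : A.ncard + Aᶜ.ncard = n := by
    rw [Set.ncard_add_ncard_compl, Nat.card_eq_fintype_card, Fintype.card_fin]
  have hBc : B.ncard + Bᶜ.ncard = n := by
    rw [Set.ncard_add_ncard_compl, Nat.card_eq_fintype_card, Fintype.card_fin]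
  have h1 : 1 ≤ A.ncard ∨ 1 ≤ B.ncard := by
    cases v with
    | inl i =>
      left
      have : i ∈ A := hvS
      have : ({i} : Set (Fin n)).ncard ≤ A.ncard :=
        Set.ncard_le_ncard (by simpa using this) (Set.toFinite _)
      simpa using this
    | inr j =>
      right
      have : j ∈ B := hvS
      have : ({j} : Set (Fin n)).ncard ≤ B.ncard :=
        Set.ncard_le_ncard (by simpa using this) (Set.toFinite _)
      simpa using this
  have h2 : 1 ≤ Aᶜ.ncard ∨ 1 ≤ Bᶜ.ncard := by
    cases w with
    | inl i =>
      left
      have hi : i ∈ Aᶜ := hwS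
      have : ({i} : Set (Fin n)).ncard ≤ Aᶜ.ncard :=
        Set.ncard_le_ncard (by simpa using hi) (Set.toFinite _)
      simpa using this
    | inr j =>
      right
      have hj : j ∈ Bᶜ := hwS
      have : ({j} : Set (Fin n)).ncard ≤ Bᶜ.ncard :=
        Set.ncard_le_ncard (by simpa using hj) (Set.toFinite _)
      simpa using this
  obtain ⟨hge, heqcase⟩ := arith A.ncard B.ncard Aᶜ.ncard Bᶜ.ncard hn hAc hBc h1 h2
  have hcge : n ≤ (cross S).ncard := by rw [hcount]; exact hge
  have hcY : (cross S).ncard ≤ Y.ncard := Set.ncard_le_ncard hcross (Set.toFinite _)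
  refine ⟨le_trans hcge hcY, fun hYn => ?_⟩
  -- equality case
  have hceq : (cross S).ncard = n := le_antisymm (le_trans hcY hYn) hcge
  have hYeq : Y = cross S :=
    (Set.eq_of_subset_of_ncard_le hcross (by omega) (Set.toFinite _)).symm
  rw [hcount] at hceq
  rcases heqcase hceq with ⟨ha, hb⟩ | ⟨ha, hb⟩ | ⟨ha, hd⟩ | ⟨hc, hb⟩
  · -- A = {i0}, B = ∅
    obtain ⟨i0, hi0⟩ := Set.ncard_eq_one.mp ha
    have hBe : B = ∅ := (Set.ncard_eq_zero (Set.toFinite _)).mp hb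
    refine ⟨Sum.inl i0, ?_⟩
    rw [hYeq, incidence_left, cross]
    have hPS : P S = {p : Fin n × Fin n | p.1 = i0} := by
      ext ⟨i, j⟩
      have hiA : Sum.inl i ∈ S ↔ i = i0 := by
        constructor
        · intro h
          have hi : i ∈ A := h
          rw [hi0] at hi; simpa using hi
        · rintro rfl
          show i ∈ A
          rw [hi0]; exact rfl
      have hjB : ¬ (Sum.inr j ∈ S) := by
        intro h
        have hj : j ∈ B := h
        rw [hBe] at hj; exact hj
      simp only [P, Set.mem_setOf_eq, hiA, eq_false hjB, iff_false, not_not]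
    rw [hPS]
  · -- A = ∅, B = {j0}
    obtain ⟨j0, hj0⟩ := Set.ncard_eq_one.mp hb
    have hAe : A = ∅ := (Set.ncard_eq_zero (Set.toFinite _)).mp ha
    refine ⟨Sum.inr j0, ?_⟩
    rw [hYeq, incidence_right, cross]
    have hPS : P S = {p : Fin n × Fin n | p.2 = j0} := by
      ext ⟨i, j⟩
      have hjB : Sum.inr j ∈ S ↔ j = j0 := by
        constructor
        · intro h
          have hj : j ∈ B := h
          rw [hj0] at hj; simpa using hj
        · rintro rfl
          show j ∈ B
          rw [hj0]; exact rfl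
      have hiA : ¬ (Sum.inl i ∈ S) := by
        intro h
        have hi : i ∈ A := h
        rw [hAe] at hi; exact hi
      simp only [P, Set.mem_setOf_eq, hjB, eq_false hiA, false_iff, not_not]
    rw [hPS]
  · -- A = univ, Bᶜ = {j0}
    obtain ⟨j0, hj0⟩ := Set.ncard_eq_one.mp hd
    have hAu : A = Set.univ := by
      apply Set.eq_of_subset_of_ncard_le (Set.subset_univ _)
      rw [Set.ncard_univ, Nat.card_eq_fintype_card, Fintype.card_fin, ha]
    refine ⟨Sum.inr j0, ?_⟩
    rw [hYeq, incidence_right, cross]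
    have hPS : P S = {p : Fin n × Fin n | p.2 = j0} := by
      ext ⟨i, j⟩
      have hiA : Sum.inl i ∈ S := by
        show i ∈ A
        rw [hAu]; trivial
      have hjB : Sum.inr j ∈ S ↔ ¬ (j = j0) := by
        constructor
        · intro h hj
          have hjb : j ∈ B := h
          have hjc : j ∉ Bᶜ := fun hcon => hcon hjb
          rw [hj0] at hjc; exact hjc (by simpa using hj)
        · intro h
          by_contra hcon
          have hjc : j ∈ Bᶜ := hcon
          rw [hj0] at hjc
          exact h (by simpa using hjc)
      simp only [P, Set.mem_setOf_eq, hjB, eq_true hiA, true_iff, not_not]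
    rw [hPS]
  · -- Aᶜ = {i0}, B = univ
    obtain ⟨i0, hi0⟩ := Set.ncard_eq_one.mp hc
    have hBu : B = Set.univ := by
      apply Set.eq_of_subset_of_ncard_le (Set.subset_univ _)
      rw [Set.ncard_univ, Nat.card_eq_fintype_card, Fintype.card_fin, hb]
    refine ⟨Sum.inl i0, ?_⟩
    rw [hYeq, incidence_left, cross]
    have hPS : P S = {p : Fin n × Fin n | p.1 = i0} := by
      ext ⟨i, j⟩
      have hjB : Sum.inr j ∈ S := by
        show j ∈ B
        rw [hBu]; trivial
      have hiA : Sum.inl i ∈ S ↔ ¬ (i = i0) := by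
        constructor
        · intro h hi
          have hia : i ∈ A := h
          have hic : i ∉ Aᶜ := fun hcon => hcon hia
          rw [hi0] at hic; exact hic (by simpa using hi)
        · intro h
          by_contra hcon
          have hic : i ∈ Aᶜ := hcon
          rw [hi0] at hic
          exact h (by simpa using hic)
      simp only [P, Set.mem_setOf_eq, hiA, eq_true hjB, iff_true, not_not]
    rw [hPS]

lemma incidence_injective (hn : 2 < n) :
    Function.Injective (fun v => (G).incidenceSet v) := by
  intro v w h
  simp only at h
  by_contra hvw
  have key : ∀ u1 u2 : Fin n ⊕ Fin n, (G).Adj v u1 → (G).Adj v u2 → u1 ≠ u2 → False := by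
    intro u1 u2 h1 h2 h12
    have e1 : s(v, u1) ∈ (G).incidenceSet w := by
      rw [← h]; exact ⟨SimpleGraph.mem_edgeSet _ |>.mpr h1, Sym2.mem_mk_left _ _⟩
    have e2 : s(v, u2) ∈ (G).incidenceSet w := by
      rw [← h]; exact ⟨SimpleGraph.mem_edgeSet _ |>.mpr h2, Sym2.mem_mk_left _ _⟩
    have m1 : w = v ∨ w = u1 := by simpa using e1.2
    have m2 : w = v ∨ w = u2 := by simpa using e2.2
    rcases m1 with rfl | rfl
    · exact hvw rfl
    · rcases m2 with h' | h'
      · exact hvw h'.symm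
      · exact h12 h'
  have h01 : (⟨0, by omega⟩ : Fin n) ≠ ⟨1, by omega⟩ := by simp
  cases v with
  | inl i =>
    exact key (Sum.inr ⟨0, by omega⟩) (Sum.inr ⟨1, by omega⟩) (by simp) (by simp) (by simp)
  | inr j =>
    exact key (Sum.inl ⟨0, by omega⟩) (Sum.inl ⟨1, by omega⟩) (by simp) (by simp) (by simp)

lemma inc_inter_nonempty_iff (hn : 2 < n) (v w : Fin n ⊕ Fin n) (hvw : v ≠ w) :
    ((G).incidenceSet v ∩ (G).incidenceSet w).Nonempty ↔ (G).Adj v w := by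
  constructor
  · rintro ⟨e, he1, he2⟩
    obtain ⟨⟨a, b⟩, rfl⟩ := (mem_edgeSet_iff e).mp he1.1
    have hv : v = Sum.inl a ∨ v = Sum.inr b := by
      have := he1.2; simpa [emb] using this
    have hw : w = Sum.inl a ∨ w = Sum.inr b := by
      have := he2.2; simpa [emb] using this
    rcases hv with rfl | rfl <;> rcases hw with rfl | rfl
    · exact absurd rfl hvw
    · simp
    · simp
    · exact absurd rfl hvw
  · intro h
    exact ⟨s(v, w), ⟨SimpleGraph.mem_edgeSet _ |>.mpr h, Sym2.mem_mk_left _ _⟩,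
      ⟨SimpleGraph.mem_edgeSet _ |>.mpr h, Sym2.mem_mk_right _ _⟩⟩

end Main

end KnnAux

theorem mincutGraph_completeBipartite_self (n : ℕ) (hn : 2 < n) :
    edgeConn (completeBipartiteGraph (Fin n) (Fin n)) = n ∧
      (∀ X : Set (Sym2 (Fin n ⊕ Fin n)),
        IsMinCut (completeBipartiteGraph (Fin n) (Fin n)) X ↔
          ∃ v : Fin n ⊕ Fin n,
            X = (completeBipartiteGraph (Fin n) (Fin n)).incidenceSet v) ∧
      Nonempty (mincutGraph (completeBipartiteGraph (Fin n) (Fin n))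
        ≃g completeBipartiteGraph (Fin n) (Fin n)) := by
  set G := completeBipartiteGraph (Fin n) (Fin n) with hG
  have v0 : Fin n ⊕ Fin n := Sum.inl ⟨0, by omega⟩
  have hcut0 : IsEdgeCut G (G.incidenceSet (Sum.inl ⟨0, by omega⟩)) :=
    KnnAux.incidence_isEdgeCut (by omega) _
  have hmem : n ∈ {m | ∃ X : Set (Sym2 (Fin n ⊕ Fin n)), IsEdgeCut G X ∧ X.ncard = m} :=
    ⟨G.incidenceSet (Sum.inl ⟨0, by omega⟩), hcut0, KnnAux.ncard_incidence _⟩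
  have hlb : ∀ m ∈ {m | ∃ X : Set (Sym2 (Fin n ⊕ Fin n)), IsEdgeCut G X ∧ X.ncard = m},
      n ≤ m := by
    rintro m ⟨X, hX, rfl⟩
    exact (KnnAux.cut_lower hn X hX).1
  have hconn : edgeConn G = n :=
    le_antisymm (Nat.sInf_le hmem) (le_csInf ⟨n, hmem⟩ hlb)
  have hchar : ∀ X : Set (Sym2 (Fin n ⊕ Fin n)),
      IsMinCut G X ↔ ∃ v : Fin n ⊕ Fin n, X = G.incidenceSet v := by
    intro X
    constructor
    · rintro ⟨hcut, hmin⟩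
      have h1 : X.ncard ≤ n := by
        have := hmin _ hcut0
        rwa [KnnAux.ncard_incidence] at this
      exact (KnnAux.cut_lower hn X hcut).2 h1
    · rintro ⟨v, rfl⟩
      refine ⟨KnnAux.incidence_isEdgeCut (by omega) v, fun Y hY => ?_⟩
      rw [KnnAux.ncard_incidence]
      exact (KnnAux.cut_lower hn Y hY).1
  refine ⟨hconn, hchar, ?_⟩
  let f : (Fin n ⊕ Fin n) → {X : Set (Sym2 (Fin n ⊕ Fin n)) // IsMinCut G X} :=
    fun v => ⟨G.incidenceSet v, (hchar _).2 ⟨v, rfl⟩⟩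
  have hfinj : Function.Injective f := fun a b hab =>
    KnnAux.incidence_injective hn (congrArg Subtype.val hab)
  have hfsurj : Function.Surjective f := by
    rintro ⟨X, hX⟩
    obtain ⟨v, rfl⟩ := (hchar X).1 hX
    exact ⟨v, rfl⟩
  let e := Equiv.ofBijective f ⟨hfinj, hfsurj⟩
  have hmap : ∀ v w, (mincutGraph G).Adj (e v) (e w) ↔ G.Adj v w := by
    intro v w
    by_cases hvw : v = w
    · subst hvw
      simp [mincutGraph]
    · have hne : e v ≠ e w := fun h => hvw (e.injective h)
      simp only [mincutGraph, SimpleGraph.fromRel_adj]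
      have hev : (e v).1 = G.incidenceSet v := rfl
      have hew : (e w).1 = G.incidenceSet w := rfl
      rw [hev, hew, Set.inter_comm (G.incidenceSet w)]
      rw [KnnAux.inc_inter_nonempty_iff hn v w hvw]
      constructor
      · rintro ⟨_, h | h⟩ <;> exact h
      · intro h
        exact ⟨hne, Or.inl h⟩
  exact ⟨(SimpleGraph.Iso.symm ⟨e, fun {v w} => (hmap v w)⟩ :)⟩
end

section
/- Every finite simple graph G is the mincut graph of some graph: there exists a connected simple graph H with G ≅ X(H). Moreover H can be chosen so that G is a subgraph of H. -/
open SimpleGraph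

variable {V : Type*}

/-!
Pad `G` with a clique `K` on `2n + 2` vertices (`n = |V|`), joining each `v ∈ V` to
`2n - deg v ≥ n + 1` vertices of `K`, so that every vertex of `G` has degree `2n`. Let `S` be a
proper nonempty vertex set. If `S` splits `K`, at least `|K| - 1 = 2n + 1` clique edges cross.
Otherwise, up to complement, `S ⊆ V`: either `S` is a single vertex, whose crossing edges form its
star, or it contains two vertices of `V`, which together have at least `2n + 2` edges into `K`.
Hence the mincuts are exactly the stars of the vertices of `G`, and two stars meet iff their
centres are adjacent.
-/

namespace SimpleGraph

variable {α : Type*} (H : SimpleGraph α)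

def cutEdges (S : Set α) : Set (Sym2 α) :=
  {e | ∃ x ∈ S, ∃ y ∉ S, H.Adj x y ∧ e = s(x, y)}

variable {H}

lemma cutEdges_compl (S : Set α) : H.cutEdges Sᶜ = H.cutEdges S := by
  ext e
  constructor <;>
  · rintro ⟨x, hx, y, hy, hxy, rfl⟩
    exact ⟨y, by simpa using hy, x, by simpa using hx, hxy.symm, Sym2.eq_swap⟩

lemma cutEdges_singleton (x : α) : H.cutEdges {x} = H.incidenceSet x := by
  ext e
  constructor
  · rintro ⟨x, rfl, y, -, hxy, rfl⟩
    exact ⟨hxy, Sym2.mem_mk_left _ _⟩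
  · rintro ⟨he, hx⟩
    rw [← Sym2.other_spec hx] at he ⊢
    exact ⟨x, rfl, _, he.ne', he, rfl⟩

lemma isEdgeCut_cutEdges {S : Set α} (hS : S.Nonempty) (hS' : Sᶜ.Nonempty) :
    IsEdgeCut H (H.cutEdges S) := by
  refine ⟨fun _ ⟨_, _, _, _, hxy, he⟩ => he ▸ hxy, fun hconn => ?_⟩
  obtain ⟨x, hx⟩ := hS
  obtain ⟨y, hy⟩ := hS'
  obtain ⟨p⟩ := hconn.preconnected x y
  obtain ⟨d, -, hd, hd'⟩ := p.exists_boundary_dart S hx hy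
  have hadj := deleteEdges_adj.1 d.adj
  exact hadj.2 ⟨_, hd, _, hd', hadj.1, rfl⟩

lemma ncard_mul_ncard_le_ncard_cutEdges [Finite α] {S A B : Set α} (hA : A ⊆ S)
    (hB : B ⊆ Sᶜ) (hAB : ∀ a ∈ A, ∀ b ∈ B, H.Adj a b) :
    A.ncard * B.ncard ≤ (H.cutEdges S).ncard := by
  have hinj : Set.InjOn (fun p : α × α => s(p.1, p.2)) (A ×ˢ B) := by
    rintro ⟨a, b⟩ ⟨ha, hb⟩ ⟨a', b'⟩ ⟨ha', hb'⟩ h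
    rcases Sym2.eq_iff.1 h with ⟨rfl, rfl⟩ | ⟨rfl, -⟩
    · rfl
    · exact absurd (hA ha) (hB hb')
  rw [← Set.ncard_prod, ← hinj.ncard_image]
  refine Set.ncard_le_ncard ?_
  rintro _ ⟨⟨a, b⟩, ⟨ha, hb⟩, rfl⟩
  exact ⟨a, hA ha, b, hB hb, hAB a ha b hb, rfl⟩

lemma ncard_incidenceSet (x : α) : (H.incidenceSet x).ncard = (H.neighborSet x).ncard := by
  classical
  simp only [← Nat.card_coe_set_eq]
  exact Nat.card_congr (H.incidenceSetEquivNeighborSet x)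

lemma eq_of_incidenceSet_eq {x y : α} (hx : 1 < (H.incidenceSet x).ncard)
    (h : H.incidenceSet x = H.incidenceSet y) : x = y := by
  by_contra hxy
  have hsub : H.incidenceSet x ⊆ {s(x, y)} := by
    simpa [h] using H.incidenceSet_inter_incidenceSet_subset hxy
  have := Set.ncard_le_ncard hsub
  rw [Set.ncard_singleton] at this
  omega

lemma incidenceSet_inter_nonempty_iff {x y : α} (hxy : x ≠ y) :
    (H.incidenceSet x ∩ H.incidenceSet y).Nonempty ↔ H.Adj x y :=
  ⟨fun ⟨_, hx, hy⟩ => H.adj_of_mem_incidenceSet hxy hx hy,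
    fun h => ⟨s(x, y), by simp [H.incidenceSet_inter_incidenceSet_of_adj h]⟩⟩

end SimpleGraph

section

variable {α ι : Type*}

lemma IsEdgeCut.exists_cutEdges_subset [Nonempty α] {H : SimpleGraph α} {X : Set (Sym2 α)}
    (hX : IsEdgeCut H X) : ∃ S : Set α, S.Nonempty ∧ Sᶜ.Nonempty ∧ H.cutEdges S ⊆ X := by
  obtain ⟨x, y, hxy⟩ : ∃ x y, ¬ (H.deleteEdges X).Reachable x y := by
    by_contra! h
    exact hX.2 ⟨h⟩
  refine ⟨{z | (H.deleteEdges X).Reachable x z}, ⟨x, .rfl⟩, ⟨y, hxy⟩, ?_⟩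
  rintro _ ⟨u, hu, v, hv, huv, rfl⟩
  by_contra he
  exact hv (hu.trans (deleteEdges_adj.2 ⟨huv, he⟩).reachable)

lemma not_isEdgeCut_of_subsingleton [Subsingleton α] [Nonempty α] {H : SimpleGraph α}
    {X : Set (Sym2 α)} : ¬ IsEdgeCut H X :=
  fun hX => hX.2 .of_subsingleton

theorem isMinCut_iff_exists_eq_incidenceSet [Finite α] [Nontrivial α] [Nonempty ι]
    {H : SimpleGraph α} {f : ι → α} {k : ℕ}
    (hdeg : ∀ i, (H.incidenceSet (f i)).ncard = k)
    (hcut : ∀ S : Set α, S.Nonempty → Sᶜ.Nonempty →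
      (∃ i, H.cutEdges S = H.incidenceSet (f i)) ∨ k < (H.cutEdges S).ncard)
    {X : Set (Sym2 α)} : IsMinCut H X ↔ ∃ i, X = H.incidenceSet (f i) := by
  have hstar (i : ι) : IsEdgeCut H (H.incidenceSet (f i)) := by
    rw [← SimpleGraph.cutEdges_singleton]
    exact SimpleGraph.isEdgeCut_cutEdges (Set.singleton_nonempty _)
      (Set.nonempty_compl_of_nontrivial _)
  have hlow (Y : Set (Sym2 α)) (hY : IsEdgeCut H Y) : k ≤ Y.ncard := by
    obtain ⟨S, hS, hS', hsub⟩ := hY.exists_cutEdges_subset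
    refine le_trans ?_ (Set.ncard_le_ncard hsub)
    rcases hcut S hS hS' with ⟨i, hi⟩ | hlt
    · rw [hi, hdeg]
    · exact hlt.le
  constructor
  · intro hX
    have hXk : X.ncard ≤ k := (hX.2 _ (hstar (Classical.arbitrary ι))).trans_eq (hdeg _)
    obtain ⟨S, hS, hS', hsub⟩ := hX.1.exists_cutEdges_subset
    rcases hcut S hS hS' with ⟨i, hi⟩ | hlt
    · exact ⟨i, (Set.eq_of_subset_of_ncard_le (hi ▸ hsub) (by rwa [hdeg])).symm⟩
    · exact absurd (hlt.trans_le (Set.ncard_le_ncard hsub)) hXk.not_gt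
  · rintro ⟨i, rfl⟩
    exact ⟨hstar i, fun Y hY => (hdeg i).trans_le (hlow Y hY)⟩

theorem nonempty_iso_mincutGraph {G : SimpleGraph ι} {H : SimpleGraph α} {f : ι → α}
    (hinj : Function.Injective fun i => H.incidenceSet (f i))
    (hadj : ∀ i j, H.Adj (f i) (f j) ↔ G.Adj i j)
    (hmin : ∀ X, IsMinCut H X ↔ ∃ i, X = H.incidenceSet (f i)) :
    Nonempty (G ≃g mincutGraph H) := by
  let e : ι ≃ {X // IsMinCut H X} :=
    Equiv.ofBijective (fun i => ⟨_, (hmin _).2 ⟨i, rfl⟩⟩)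
      ⟨fun i j h => hinj (congrArg Subtype.val h),
        fun ⟨X, hX⟩ => ((hmin X).1 hX).imp fun i hi => Subtype.ext hi.symm⟩
  have hne {i j : ι} (hij : i ≠ j) : f i ≠ f j :=
    fun h => hij (hinj (congrArg H.incidenceSet h))
  refine ⟨⟨e, fun {i j} => ?_⟩⟩
  rw [mincutGraph, SimpleGraph.fromRel_adj, e.injective.ne_iff, Set.inter_comm (e j).1, or_self,
    ← hadj]
  exact ⟨fun ⟨hij, h⟩ => (SimpleGraph.incidenceSet_inter_nonempty_iff (hne hij)).1 h,
    fun h => ⟨fun hij => h.ne (congrArg f hij),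
      (SimpleGraph.incidenceSet_inter_nonempty_iff h.ne).2 h⟩⟩

theorem nonempty_iso_mincutGraph_of_isEmpty [IsEmpty ι] [Subsingleton α] [Nonempty α]
    (G : SimpleGraph ι) (H : SimpleGraph α) : Nonempty (G ≃g mincutGraph H) :=
  have : IsEmpty {X // IsMinCut H X} := ⟨fun X => not_isEdgeCut_of_subsingleton X.2.1⟩
  ⟨⟨Equiv.equivOfIsEmpty _ _, fun {i} => isEmptyElim i⟩⟩

end

lemma Fin.ncard_setOf_val_lt {m c : ℕ} (h : c ≤ m) : {i : Fin m | (i : ℕ) < c}.ncard = c := by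
  rw [← Fin.range_castLE h, Set.ncard_range_of_injective (Fin.castLE_injective h), Nat.card_fin]

namespace SimpleGraph

variable {V : Type*} [Fintype V] (G : SimpleGraph V)

local notation "𝕂" => Fin (2 * Fintype.card V + 2)

noncomputable def padDegree (v : V) : ℕ := 2 * Fintype.card V - (G.neighborSet v).ncard

def padWithClique : SimpleGraph (V ⊕ 𝕂) where
  Adj
    | .inl v, .inl w => G.Adj v w
    | .inl v, .inr i => i < G.padDegree v
    | .inr i, .inl v => i < G.padDegree v
    | .inr i, .inr j => i ≠ j
  symm := ⟨by
    rintro (v | i) (w | j) h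
    exacts [h.symm, h, h, h.symm]⟩
  loopless := ⟨by rintro (v | i) h <;> simp_all⟩

variable {G}

lemma ncard_neighborSet_lt_card (v : V) : (G.neighborSet v).ncard < Fintype.card V := by
  rw [← Nat.card_eq_fintype_card]
  exact Set.ncard_lt_card fun h => G.notMem_neighborSet_self (h ▸ Set.mem_univ v)

lemma card_lt_padDegree (v : V) : Fintype.card V < G.padDegree v := by
  have := ncard_neighborSet_lt_card (G := G) v
  unfold padDegree
  omega

lemma ncard_incidenceSet_inl_padWithClique (v : V) :
    (G.padWithClique.incidenceSet (.inl v)).ncard = 2 * Fintype.card V := by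
  have hnbr : G.padWithClique.neighborSet (.inl v) =
      .inl '' G.neighborSet v ∪ .inr '' {i : 𝕂 | (i : ℕ) < G.padDegree v} := by
    ext (w | i) <;> simp [padWithClique]
  have := ncard_neighborSet_lt_card (G := G) v
  rw [ncard_incidenceSet, hnbr, Set.ncard_union_eq Set.disjoint_image_inl_image_inr,
    Set.ncard_image_of_injective _ Sum.inl_injective,
    Set.ncard_image_of_injective _ Sum.inr_injective,
    Fin.ncard_setOf_val_lt (by unfold padDegree; omega)]
  unfold padDegree
  omega

lemma padWithClique_connected : G.padWithClique.Connected := by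
  have hub (x : V ⊕ 𝕂) : G.padWithClique.Reachable x (.inr 0) := by
    obtain v | i := x
    · exact Adj.reachable
        (show 0 < G.padDegree v from (Nat.zero_le _).trans_lt (card_lt_padDegree v))
    · obtain rfl | h := eq_or_ne i 0
      · rfl
      · exact Adj.reachable h
  exact ⟨fun x y => (hub x).trans (hub y).symm⟩

lemma lt_ncard_cutEdges_padWithClique_of_inr_mem_of_inr_notMem {S : Set (V ⊕ 𝕂)} {i j : 𝕂}
    (hi : .inr i ∈ S) (hj : .inr j ∉ S) :
    2 * Fintype.card V < (G.padWithClique.cutEdges S).ncard := by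
  set K := Set.range (Sum.inr : 𝕂 → V ⊕ 𝕂)
  have hK : (K ∩ S).ncard + (K \ S).ncard = 2 * Fintype.card V + 2 := by
    rw [Set.ncard_inter_add_ncard_sdiff_eq_ncard, Set.ncard_range_of_injective Sum.inr_injective,
      Nat.card_fin]
  have hin : 0 < (K ∩ S).ncard := (Set.ncard_pos).2 ⟨_, ⟨i, rfl⟩, hi⟩
  have hout : 0 < (K \ S).ncard := (Set.ncard_pos).2 ⟨_, ⟨j, rfl⟩, hj⟩
  have := ncard_mul_ncard_le_ncard_cutEdges (H := G.padWithClique) (A := K ∩ S) (B := K \ S)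
    Set.inter_subset_right (fun _ hx => hx.2) (by
      rintro _ ⟨⟨a, rfl⟩, ha⟩ _ ⟨⟨b, rfl⟩, hb⟩
      exact fun hab => hb (hab ▸ ha))
  nlinarith

lemma padWithClique_cutEdges_eq_incidenceSet_or_lt_of_forall_inr_notMem {T : Set (V ⊕ 𝕂)}
    (hT : T.Nonempty) (hinr : ∀ i, .inr i ∉ T) :
    (∃ v, G.padWithClique.cutEdges T = G.padWithClique.incidenceSet (.inl v)) ∨
      2 * Fintype.card V < (G.padWithClique.cutEdges T).ncard := by
  have hinl : ∀ x ∈ T, ∃ v, x = .inl v := by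
    rintro (v | i) hx
    exacts [⟨v, rfl⟩, absurd hx (hinr i)]
  rcases hT.exists_eq_singleton_or_nontrivial with ⟨x, rfl⟩ | ⟨x, hx, y, hy, hxy⟩
  · obtain ⟨v, rfl⟩ := hinl x rfl
    exact .inl ⟨v, cutEdges_singleton _⟩
  right
  set B := Sum.inr (α := V) '' {i : 𝕂 | (i : ℕ) < Fintype.card V + 1}
  have hB : B.ncard = Fintype.card V + 1 := by
    rw [Set.ncard_image_of_injective _ Sum.inr_injective, Fin.ncard_setOf_val_lt (by omega)]
  calc 2 * Fintype.card V < ({x, y} : Set (V ⊕ 𝕂)).ncard * B.ncard := by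
        rw [Set.ncard_pair hxy, hB]; omega
    _ ≤ _ := by
      refine ncard_mul_ncard_le_ncard_cutEdges (Set.pair_subset hx hy)
        (by rintro _ ⟨i, -, rfl⟩; exact hinr i) ?_
      rintro a ha _ ⟨i, hi, rfl⟩
      obtain ⟨v, rfl⟩ := hinl a (Set.pair_subset hx hy ha)
      exact lt_of_lt_of_le hi (card_lt_padDegree v)

lemma padWithClique_cutEdges_eq_incidenceSet_or_lt {S : Set (V ⊕ 𝕂)} (hS : S.Nonempty)
    (hS' : Sᶜ.Nonempty) :
    (∃ v, G.padWithClique.cutEdges S = G.padWithClique.incidenceSet (.inl v)) ∨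
      2 * Fintype.card V < (G.padWithClique.cutEdges S).ncard := by
  by_cases hin : ∃ i, .inr i ∈ S
  · by_cases hout : ∃ j, .inr j ∉ S
    · obtain ⟨i, hi⟩ := hin
      obtain ⟨j, hj⟩ := hout
      exact .inr (lt_ncard_cutEdges_padWithClique_of_inr_mem_of_inr_notMem hi hj)
    · push Not at hout
      rw [← cutEdges_compl]
      exact padWithClique_cutEdges_eq_incidenceSet_or_lt_of_forall_inr_notMem hS'
        fun i h => h (hout i)
  · push Not at hin
    exact padWithClique_cutEdges_eq_incidenceSet_or_lt_of_forall_inr_notMem hS hin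

end SimpleGraph

theorem every_graph_is_mincutGraph {V : Type*} [Fintype V] (G : SimpleGraph V) :
    ∃ (m : ℕ) (H : SimpleGraph (V ⊕ Fin m)), H.Connected ∧
      (∀ v w : V, G.Adj v w → H.Adj (Sum.inl v) (Sum.inl w)) ∧
      Nonempty (G ≃g mincutGraph H) := by
  cases isEmpty_or_nonempty V
  · have : Subsingleton (V ⊕ Fin 1) := (Equiv.emptySum V (Fin 1)).subsingleton
    exact ⟨1, ⊥, .of_subsingleton, fun v => isEmptyElim v,
      nonempty_iso_mincutGraph_of_isEmpty G ⊥⟩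
  · have : Nontrivial (V ⊕ Fin (2 * Fintype.card V + 2)) := Sum.inr_injective.nontrivial
    have hdeg := G.ncard_incidenceSet_inl_padWithClique
    have hk : 1 < 2 * Fintype.card V := by have := Fintype.card_pos (α := V); omega
    have hmin (X : Set (Sym2 (V ⊕ Fin (2 * Fintype.card V + 2)))) :=
      isMinCut_iff_exists_eq_incidenceSet (X := X) hdeg
        fun _ => SimpleGraph.padWithClique_cutEdges_eq_incidenceSet_or_lt
    refine ⟨_, G.padWithClique, G.padWithClique_connected, fun v w h => h,
      nonempty_iso_mincutGraph ?_ (fun v w => Iff.rfl) hmin⟩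
    exact fun v w h => Sum.inl_injective (SimpleGraph.eq_of_incidenceSet_eq (by rwa [hdeg]) h)
end

section
/- Every finite simple graph on n vertices is the intersection graph of a family of subsets of a set of cardinality at most ⌊n²/4⌋. -/
open SimpleGraph

variable {V : Type*}

open Finset in

private lemma cover_aux {V : Type*} [DecidableEq V] (G : SimpleGraph V) :
    ∀ s : Finset V, ∃ F : Finset (Finset V), F.card ≤ s.card ^ 2 / 4 ∧
      (∀ c ∈ F, c ⊆ s ∧ ∀ a ∈ c, ∀ b ∈ c, a ≠ b → G.Adj a b) ∧
      (∀ a ∈ s, ∀ b ∈ s, G.Adj a b → ∃ c ∈ F, a ∈ c ∧ b ∈ c) := by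
  classical
  intro s
  induction s using Finset.strongInduction with
  | _ s ih =>
    by_cases h : ∃ u ∈ s, ∃ v ∈ s, G.Adj u v
    · obtain ⟨u, hu, v, hv, huv⟩ := h
      have hne : u ≠ v := G.ne_of_adj huv
      set s' := s \ {u, v} with hs'
      have hss : s' ⊂ s := by
        refine Finset.sdiff_ssubset ?_ (by simp)
        intro x hx
        simp at hx
        rcases hx with rfl | rfl <;> assumption
      obtain ⟨F', hcard, hcl, hcov⟩ := ih s' hss
      set cl : V → Finset V := fun w =>
        if G.Adj u w ∧ G.Adj v w then {u, v, w}
        else if G.Adj u w then {u, w} else {v, w} with hcl_def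
      set N : Finset (Finset V) :=
        (s'.filter (fun w => G.Adj u w ∨ G.Adj v w)).image cl with hN
      have hs'card : s'.card = s.card - 2 := by
        rw [hs', Finset.card_sdiff_of_subset (by intro x hx; simp at hx; rcases hx with rfl | rfl <;> assumption)]
        simp [hne]
      have hs2 : 2 ≤ s.card := by
        have := Finset.card_le_card (show {u, v} ⊆ s by
          intro x hx; simp at hx; rcases hx with rfl | rfl <;> assumption)
        simpa [hne] using this
      refine ⟨insert {u, v} (F' ∪ N), ?_, ?_, ?_⟩
      · have h1 : (insert {u, v} (F' ∪ N)).card ≤ F'.card + N.card + 1 := by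
          calc (insert {u, v} (F' ∪ N)).card ≤ (F' ∪ N).card + 1 := Finset.card_insert_le _ _
          _ ≤ F'.card + N.card + 1 := by
              have := Finset.card_union_le F' N; omega
        have h2 : N.card ≤ s'.card := by
          calc N.card ≤ (s'.filter (fun w => G.Adj u w ∨ G.Adj v w)).card :=
                Finset.card_image_le
          _ ≤ s'.card := Finset.card_filter_le _ _
        obtain ⟨k, hk⟩ := Nat.le.dest hs2
        have e2 : s.card - 2 = k := by omega
        have e1 : s.card - 1 = k + 1 := by omega
        have h3 : s.card ^ 2 = (s.card - 2) ^ 2 + (s.card - 1) * 4 := by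
          rw [e2, e1, ← hk]; ring
        have h4 : s.card ^ 2 / 4 = (s.card - 2) ^ 2 / 4 + (s.card - 1) := by
          rw [h3, Nat.add_mul_div_right _ _ (by norm_num)]
        rw [hs'card] at hcard h2
        rw [h4]
        omega
      · intro c hc
        simp only [Finset.mem_insert, Finset.mem_union] at hc
        rcases hc with rfl | hc | hc
        · constructor
          · intro x hx; simp at hx; rcases hx with rfl | rfl <;> assumption
          · intro a ha b hb hab
            simp at ha hb
            rcases ha with rfl | rfl <;> rcases hb with rfl | rfl <;>
              first | exact absurd rfl hab | exact huv | exact huv.symm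
        · obtain ⟨h1, h2⟩ := hcl c hc
          exact ⟨h1.trans hss.subset, h2⟩
        · rw [hN] at hc
          simp only [Finset.mem_image, Finset.mem_filter] at hc
          obtain ⟨w, ⟨hws, hadj⟩, rfl⟩ := hc
          have hws' : w ∈ s := hss.subset hws
          have hwu : w ≠ u := by rintro rfl; simp [hs'] at hws
          have hwv : w ≠ v := by rintro rfl; simp [hs'] at hws
          rw [hcl_def]
          dsimp only
          split_ifs with h1 h2
          · obtain ⟨huw, hvw⟩ := h1
            constructor
            · intro x hx; simp at hx; rcases hx with rfl | rfl | rfl <;> assumption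
            · intro a ha b hb hab
              simp at ha hb
              rcases ha with rfl | rfl | rfl <;> rcases hb with rfl | rfl | rfl <;>
                first | exact absurd rfl hab | assumption | exact huv.symm | exact huw.symm | exact hvw.symm | exact huv
          · constructor
            · intro x hx; simp at hx; rcases hx with rfl | rfl <;> assumption
            · intro a ha b hb hab
              simp at ha hb
              rcases ha with rfl | rfl <;> rcases hb with rfl | rfl <;>
                first | exact absurd rfl hab | exact h2 | exact h2.symm
          · have hvw : G.Adj v w := by tauto
            constructor
            · intro x hx; simp at hx; rcases hx with rfl | rfl <;> assumption
            · intro a ha b hb hab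
              simp at ha hb
              rcases ha with rfl | rfl <;> rcases hb with rfl | rfl <;>
                first | exact absurd rfl hab | exact hvw | exact hvw.symm
      · -- coverage
        intro a ha b hb hab
        have key : ∀ x ∈ s', (G.Adj u x ∨ G.Adj v x) →
            ∃ c ∈ insert {u, v} (F' ∪ N), x ∈ c ∧ (G.Adj u x → u ∈ c) ∧ (G.Adj v x → v ∈ c) := by
          intro x hx hadj
          refine ⟨cl x, ?_, ?_, ?_, ?_⟩
          · simp only [Finset.mem_insert, Finset.mem_union, hN, Finset.mem_image,
              Finset.mem_filter]
            exact Or.inr (Or.inr ⟨x, ⟨hx, hadj⟩, rfl⟩)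
          · rw [hcl_def]; dsimp only; split_ifs <;> simp
          · intro hux; rw [hcl_def]; dsimp only; split_ifs <;> simp_all
          · intro hvx; rw [hcl_def]; dsimp only; split_ifs <;> simp_all
        by_cases ha' : a ∈ s'
        · by_cases hb' : b ∈ s'
          · obtain ⟨c, hc, h1, h2⟩ := hcov a ha' b hb' hab
            exact ⟨c, by simp [hc], h1, h2⟩
          · have hb2 : b = u ∨ b = v := by
              rw [hs'] at hb'; simp [hb] at hb'; tauto
            rcases hb2 with rfl | rfl
            · obtain ⟨c, hc, hx, h1, _⟩ := key a ha' (Or.inl hab.symm)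
              exact ⟨c, hc, hx, h1 hab.symm⟩
            · obtain ⟨c, hc, hx, _, h2⟩ := key a ha' (Or.inr hab.symm)
              exact ⟨c, hc, hx, h2 hab.symm⟩
        · have ha2 : a = u ∨ a = v := by
            rw [hs'] at ha'; simp [ha] at ha'; tauto
          by_cases hb' : b ∈ s'
          · rcases ha2 with rfl | rfl
            · obtain ⟨c, hc, hx, h1, _⟩ := key b hb' (Or.inl hab)
              exact ⟨c, hc, h1 hab, hx⟩
            · obtain ⟨c, hc, hx, _, h2⟩ := key b hb' (Or.inr hab)
              exact ⟨c, hc, h2 hab, hx⟩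
          · have hb2 : b = u ∨ b = v := by
              rw [hs'] at hb'; simp [hb] at hb'; tauto
            refine ⟨{u, v}, by simp, ?_, ?_⟩ <;>
              (rcases ha2 with rfl | rfl <;> rcases hb2 with rfl | rfl <;>
                first | simp | exact absurd hab (by simp [G.loopless]))
    · push_neg at h
      refine ⟨∅, by simp, by simp, ?_⟩
      intro a ha b hb hab
      exact absurd hab (h a ha b hb)

open Finset in
theorem intersection_number_le {V : Type*} [Fintype V] (G : SimpleGraph V) :
    ∃ f : V → Finset (Fin (Fintype.card V ^ 2 / 4)),
      ∀ v w : V, v ≠ w → (G.Adj v w ↔ (f v ∩ f w).Nonempty) := by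
  classical
  obtain ⟨F, hcard, hcl, hcov⟩ := cover_aux G Finset.univ
  have hcard' : Fintype.card ↥F ≤ Fintype.card (Fin (Fintype.card V ^ 2 / 4)) := by
    simpa [Fintype.card_coe] using hcard
  obtain ⟨e⟩ := Function.Embedding.nonempty_of_card_le hcard'
  refine ⟨fun v => (F.attach.filter fun c => v ∈ c.1).image e, ?_⟩
  intro v w hvw
  constructor
  · intro hadj
    obtain ⟨c, hcF, hvc, hwc⟩ := hcov v (mem_univ v) w (mem_univ w) hadj
    refine ⟨e ⟨c, hcF⟩, Finset.mem_inter.2 ⟨?_, ?_⟩⟩ <;>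
      · simp only [Finset.mem_image, Finset.mem_filter, Finset.mem_attach, true_and]
        exact ⟨⟨c, hcF⟩, by simpa, rfl⟩
  · rintro ⟨x, hx⟩
    rw [Finset.mem_inter] at hx
    obtain ⟨h1, h2⟩ := hx
    simp only [Finset.mem_image, Finset.mem_filter, Finset.mem_attach, true_and] at h1 h2
    obtain ⟨c1, hv1, he1⟩ := h1
    obtain ⟨c2, hv2, he2⟩ := h2
    have hc : c1 = c2 := e.injective (he1.trans he2.symm)
    subst hc
    exact (hcl c1.1 c1.2).2 v hv1 w hv2 hvw
end

section
/- For n ≥ 3, the line graph L(K_n) is (2n−4)-regular and super-λ, and therefore X(L(K_n)) ≅ L(K_n). -/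
open SimpleGraph

variable {V : Type*}

/-- `G` is super-λ: maximally edge-connected and every minimum edge-cut is the set of
edges incident to some minimum-degree vertex. -/
def IsSuperLambda {V : Type*} [Fintype V] (G : SimpleGraph V) [DecidableRel G.Adj] : Prop :=
  edgeConn G = G.minDegree ∧
    ∀ X : Set (Sym2 V), IsMinCut G X →
      ∃ v : V, G.degree v = G.minDegree ∧ X = G.incidenceSet v

/-!
An edge-cut `X` of a graph contains every edge leaving some vertex set `S` with `S` and `Sᶜ`
nonempty. When the graph is `d`-regular and every such `S` with at least two vertices on each side
has more than `d` leaving edges, the minimum edge-cuts are exactly the `d` edges at one vertex, so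
the graph is super-λ and `v ↦ incidenceSet v` identifies it with its mincut graph.

For `L(K_n)`, `S` is a set of edges of `K_n`, and the edges of `L(K_n)` leaving it number
`∑ v, d_S(v) d_{Sᶜ}(v)`, where `d_S(v)` counts the edges of `S` at the vertex `v` of `K_n` and
`d_S(v) + d_{Sᶜ}(v) = n - 1`. If some vertex meets no edge of `S`, then every vertex meets `Sᶜ`, so
the endpoints of two distinct edges of `S` give three vertices meeting both `S` and `Sᶜ` (and
symmetrically). Each contributes at least `n - 2`, and `3 (n - 2) > 2n - 4`.
-/

open Finset

namespace SimpleGraph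

section EdgeCut

variable {G : SimpleGraph V}

lemma isEdgeCut_incidenceSet [Nontrivial V] (v : V) : IsEdgeCut G (G.incidenceSet v) := by
  refine ⟨G.incidenceSet_subset v, fun hconn => ?_⟩
  obtain ⟨w, hwv⟩ := exists_ne v
  obtain ⟨p⟩ := hconn.preconnected v w
  cases p with
  | nil => exact hwv rfl
  | cons hadj _ =>
    rw [deleteEdges_adj] at hadj
    exact hadj.2 ⟨hadj.1, Sym2.mem_mk_left _ _⟩

variable (G) in
lemma ncard_incidenceSet_s16 [Fintype V] [DecidableRel G.Adj] (v : V) :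
    (G.incidenceSet v).ncard = G.degree v := by
  classical
  rw [Set.ncard_eq_toFinset_card', Set.toFinset_card, card_incidenceSet_eq_degree]

variable [Fintype V] [DecidableEq V]

def edgeBoundary (G : SimpleGraph V) [DecidableRel G.Adj] (S : Finset V) : Finset (Sym2 V) :=
  (G.interedges S Sᶜ).image fun p => s(p.1, p.2)

variable [DecidableRel G.Adj]

variable (G) in
lemma card_edgeBoundary (S : Finset V) : #(edgeBoundary G S) = #(G.interedges S Sᶜ) := by
  refine card_image_of_injOn fun p hp q hq hpq => ?_
  rw [mem_coe, mem_interedges_iff, mem_compl] at hp hq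
  simp only [Sym2.eq_iff] at hpq
  rcases hpq with h | ⟨h1, h2⟩
  · exact Prod.ext h.1 h.2
  · exact absurd (h1 ▸ hp.1) hq.2.1

lemma mem_edgeBoundary_iff {S : Finset V} {e : Sym2 V} :
    e ∈ edgeBoundary G S ↔ ∃ a ∈ S, ∃ b ∉ S, G.Adj a b ∧ s(a, b) = e := by
  simp [edgeBoundary, mem_interedges_iff, and_assoc]

variable (G) in
lemma edgeBoundary_compl (S : Finset V) : edgeBoundary G Sᶜ = edgeBoundary G S := by
  ext e
  simp only [mem_edgeBoundary_iff, mem_compl, not_not]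
  constructor <;>
  · rintro ⟨a, ha, b, hb, hab, rfl⟩
    exact ⟨b, hb, a, ha, hab.symm, Sym2.eq_swap⟩

variable (G) in
lemma coe_edgeBoundary_singleton (v : V) : ↑(edgeBoundary G {v}) = G.incidenceSet v := by
  ext e
  simp only [mem_coe, mem_edgeBoundary_iff, mem_singleton, exists_eq_left]
  constructor
  · rintro ⟨w, -, hvw, rfl⟩
    exact ⟨hvw, Sym2.mem_mk_left _ _⟩
  · rintro ⟨he, hv⟩
    rw [← Sym2.other_spec hv] at he ⊢
    rw [mem_edgeSet] at he
    exact ⟨_, he.ne', he, rfl⟩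

lemma IsEdgeCut.exists_edgeBoundary_subset [Nonempty V] {X : Set (Sym2 V)} (hX : IsEdgeCut G X) :
    ∃ S : Finset V, S.Nonempty ∧ Sᶜ.Nonempty ∧ ↑(edgeBoundary G S) ⊆ X := by
  classical
  obtain ⟨u, w, huw⟩ : ∃ u w, ¬(G.deleteEdges X).Reachable u w := by
    by_contra! h
    exact hX.2 (connected_iff_exists_forall_reachable _ |>.2 ⟨Classical.arbitrary V, h _⟩)
  refine ⟨({x | (G.deleteEdges X).Reachable u x} : Finset V), ⟨u, by simp⟩,
    ⟨w, by simpa using huw⟩, ?_⟩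
  rintro e he
  obtain ⟨a, ha, b, hb, hab, rfl⟩ := mem_edgeBoundary_iff.1 (mem_coe.1 he)
  by_contra hX'
  simp only [mem_filter, mem_univ, true_and] at ha hb
  exact hb (ha.trans (deleteEdges_adj.2 ⟨hab, hX'⟩).reachable)

end EdgeCut

section SuperLambdaCriterion

variable [Fintype V] [DecidableEq V] {G : SimpleGraph V} [DecidableRel G.Adj]
  {d : ℕ} {X : Set (Sym2 V)}

lemma incidenceSet_injective (h : ∀ v, 2 ≤ G.degree v) : Function.Injective G.incidenceSet := by
  intro u v huv
  by_contra hne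
  have : (G.incidenceSet u).ncard ≤ 1 :=
    calc (G.incidenceSet u).ncard = (G.incidenceSet u ∩ G.incidenceSet v).ncard := by
          rw [huv, Set.inter_self]
      _ ≤ ({s(u, v)} : Set (Sym2 V)).ncard :=
          Set.ncard_le_ncard (G.incidenceSet_inter_incidenceSet_subset hne) (Set.toFinite _)
      _ = 1 := Set.ncard_singleton _
  have := h u
  rw [← G.ncard_incidenceSet_s16] at this
  omega

lemma IsEdgeCut.exists_incidenceSet_subset_or_lt_ncard [Nonempty V]
    (hbd : ∀ S : Finset V, 2 ≤ #S → 2 ≤ #Sᶜ → d < #(edgeBoundary G S)) (hX : IsEdgeCut G X) :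
    (∃ v, G.incidenceSet v ⊆ X) ∨ d < X.ncard := by
  obtain ⟨S, hS, hSc, hsub⟩ := hX.exists_edgeBoundary_subset
  by_cases hS1 : #S = 1
  · obtain ⟨v, rfl⟩ := card_eq_one.1 hS1
    exact .inl ⟨v, G.coe_edgeBoundary_singleton v ▸ hsub⟩
  by_cases hSc1 : #Sᶜ = 1
  · obtain ⟨v, hv⟩ := card_eq_one.1 hSc1
    refine .inl ⟨v, ?_⟩
    rwa [← G.coe_edgeBoundary_singleton, ← hv, G.edgeBoundary_compl]
  refine .inr ?_
  calc d < #(edgeBoundary G S) := hbd S (by grind [hS.card_pos]) (by grind [hSc.card_pos])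
    _ = (↑(edgeBoundary G S) : Set (Sym2 V)).ncard := (Set.ncard_coe_finset _).symm
    _ ≤ X.ncard := Set.ncard_le_ncard hsub (Set.toFinite X)

lemma IsEdgeCut.le_ncard [Nonempty V] (hreg : G.IsRegularOfDegree d)
    (hbd : ∀ S : Finset V, 2 ≤ #S → 2 ≤ #Sᶜ → d < #(edgeBoundary G S)) (hX : IsEdgeCut G X) :
    d ≤ X.ncard := by
  obtain ⟨v, hv⟩ | hlt := hX.exists_incidenceSet_subset_or_lt_ncard hbd
  · rw [← hreg.degree_eq v, ← G.ncard_incidenceSet_s16 v]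
    exact Set.ncard_le_ncard hv (Set.toFinite X)
  · exact hlt.le

lemma IsEdgeCut.exists_eq_incidenceSet [Nonempty V] (hreg : G.IsRegularOfDegree d)
    (hbd : ∀ S : Finset V, 2 ≤ #S → 2 ≤ #Sᶜ → d < #(edgeBoundary G S)) (hX : IsEdgeCut G X)
    (hXd : X.ncard ≤ d) : ∃ v, X = G.incidenceSet v := by
  obtain ⟨v, hv⟩ | hlt := hX.exists_incidenceSet_subset_or_lt_ncard hbd
  · refine ⟨v, (Set.eq_of_subset_of_ncard_le hv ?_ (Set.toFinite X)).symm⟩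
    rwa [G.ncard_incidenceSet_s16, hreg.degree_eq]
  · exact absurd hXd hlt.not_ge

lemma isMinCut_iff [Nontrivial V] (hreg : G.IsRegularOfDegree d)
    (hbd : ∀ S : Finset V, 2 ≤ #S → 2 ≤ #Sᶜ → d < #(edgeBoundary G S)) :
    IsMinCut G X ↔ ∃ v, X = G.incidenceSet v := by
  have ncard_eq (v : V) : (G.incidenceSet v).ncard = d := by
    rw [G.ncard_incidenceSet_s16, hreg.degree_eq]
  constructor
  · rintro ⟨hX, hmin⟩
    obtain ⟨v⟩ : Nonempty V := inferInstance
    exact hX.exists_eq_incidenceSet hreg hbd (ncard_eq v ▸ hmin _ (isEdgeCut_incidenceSet v))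
  · rintro ⟨v, rfl⟩
    exact ⟨isEdgeCut_incidenceSet v, fun Y hY => ncard_eq v ▸ hY.le_ncard hreg hbd⟩

lemma edgeConn_eq [Nontrivial V] (hreg : G.IsRegularOfDegree d)
    (hbd : ∀ S : Finset V, 2 ≤ #S → 2 ≤ #Sᶜ → d < #(edgeBoundary G S)) : edgeConn G = d := by
  obtain ⟨v⟩ : Nonempty V := inferInstance
  have hcut : ∃ X, IsEdgeCut G X ∧ X.ncard = d :=
    ⟨_, isEdgeCut_incidenceSet v, by rw [G.ncard_incidenceSet_s16, hreg.degree_eq]⟩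
  refine le_antisymm (Nat.sInf_le hcut) (le_csInf ⟨d, hcut⟩ ?_)
  rintro _ ⟨X, hX, rfl⟩
  exact hX.le_ncard hreg hbd

lemma isSuperLambda [Nontrivial V] (hreg : G.IsRegularOfDegree d)
    (hbd : ∀ S : Finset V, 2 ≤ #S → 2 ≤ #Sᶜ → d < #(edgeBoundary G S)) : IsSuperLambda G := by
  refine ⟨by rw [edgeConn_eq hreg hbd, hreg.minDegree_eq], fun X hX => ?_⟩
  obtain ⟨v, rfl⟩ := (isMinCut_iff hreg hbd).1 hX
  exact ⟨v, by rw [hreg.degree_eq, hreg.minDegree_eq], rfl⟩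

lemma bijective_incidenceSet_isMinCut [Nontrivial V] (hreg : G.IsRegularOfDegree d) (hd : 2 ≤ d)
    (hbd : ∀ S : Finset V, 2 ≤ #S → 2 ≤ #Sᶜ → d < #(edgeBoundary G S)) :
    Function.Bijective fun v => (⟨G.incidenceSet v, (isMinCut_iff hreg hbd).2 ⟨v, rfl⟩⟩ :
      {X : Set (Sym2 V) // IsMinCut G X}) := by
  refine ⟨fun u v huv => ?_, fun X => ?_⟩
  · refine incidenceSet_injective (fun w => ?_) (congrArg Subtype.val huv)
    rw [hreg.degree_eq]
    exact hd
  · obtain ⟨v, hv⟩ := (isMinCut_iff hreg hbd).1 X.2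
    exact ⟨v, Subtype.ext hv.symm⟩

noncomputable def mincutGraphIso [Nontrivial V] (hreg : G.IsRegularOfDegree d) (hd : 2 ≤ d)
    (hbd : ∀ S : Finset V, 2 ≤ #S → 2 ≤ #Sᶜ → d < #(edgeBoundary G S)) :
    G ≃g mincutGraph G where
  toEquiv := Equiv.ofBijective _ (bijective_incidenceSet_isMinCut hreg hd hbd)
  map_rel_iff' {u v} := by
    rw [mincutGraph, fromRel_adj, Ne, EmbeddingLike.apply_eq_iff_eq]
    simp only [Equiv.ofBijective_apply, Set.inter_comm (G.incidenceSet v), or_self]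
    exact ⟨fun ⟨huv, _, hu, hv⟩ => G.adj_of_mem_incidenceSet huv hu hv,
      fun h => ⟨h.ne, by simp [G.incidenceSet_inter_incidenceSet_of_adj h]⟩⟩

end SuperLambdaCriterion

section LineGraph

variable {G : SimpleGraph V}

lemma three_le_card_of_ne {e f : G.edgeSet} (hef : e ≠ f) {P : Finset V}
    (he : ∀ v ∈ (e : Sym2 V), v ∈ P) (hf : ∀ v ∈ (f : Sym2 V), v ∈ P) : 3 ≤ #P := by
  obtain ⟨⟨a, b⟩, hab⟩ := e
  obtain ⟨⟨x, y⟩, hxy⟩ := f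
  have hab' : a ≠ b := G.ne_of_adj hab
  have hxy' : x ≠ y := G.ne_of_adj hxy
  simp only [ne_eq, Subtype.mk.injEq, Sym2.eq_iff, Sym2.mem_iff, forall_eq_or_imp, forall_eq]
    at hef he hf
  rw [Nat.succ_le_iff, two_lt_card]
  by_cases hx : x = a ∨ x = b
  · exact ⟨a, he.1, b, he.2, y, hf.2, hab', by grind, by grind⟩
  · exact ⟨a, he.1, b, he.2, x, hf.1, hab', by grind, by grind⟩

variable [Fintype V] [DecidableEq V]

def edgesAt (S : Finset G.edgeSet) (v : V) : Finset G.edgeSet := {e ∈ S | v ∈ (e : Sym2 V)}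

lemma card_interedges_lineGraph [DecidableRel G.lineGraph.Adj] {S T : Finset G.edgeSet}
    (hST : Disjoint S T) :
    #(G.lineGraph.interedges S T) = ∑ v, #(edgesAt S v) * #(edgesAt T v) := by
  have hunion : G.lineGraph.interedges S T = univ.biUnion fun v => edgesAt S v ×ˢ edgesAt T v := by
    ext ⟨e, f⟩
    simp only [mk_mem_interedges_iff, lineGraph_adj_iff_exists, mem_biUnion, mem_univ, true_and,
      mem_product, edgesAt, mem_filter]
    constructor
    · rintro ⟨he, hf, -, v, hve, hvf⟩
      exact ⟨v, ⟨he, hve⟩, hf, hvf⟩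
    · rintro ⟨v, ⟨he, hve⟩, hf, hvf⟩
      exact ⟨he, hf, hST.forall_ne_finset he hf, v, hve, hvf⟩
  rw [hunion, card_biUnion]
  · simp only [card_product]
  · intro v _ w _ hvw
    rw [Function.onFun, Finset.disjoint_left]
    rintro ⟨e, f⟩ hv hw
    simp only [edgesAt, mem_product, mem_filter] at hv hw
    exact hST.forall_ne_finset hv.1.1 hv.2.1
      (Subtype.ext (Sym2.eq_of_ne_mem hvw hv.1.2 hw.1.2 hv.2.2 hw.2.2))

variable [DecidableRel G.Adj]

lemma card_edgesAt_univ (v : V) : #(edgesAt (univ : Finset G.edgeSet) v) = G.degree v := by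
  rw [← card_incidenceFinset_eq_degree, ← card_map (Function.Embedding.subtype _)]
  congr 1
  ext e
  simp [edgesAt, incidenceSet, and_comm]

lemma card_edgesAt_add_card_edgesAt_compl (S : Finset G.edgeSet) (v : V) :
    #(edgesAt S v) + #(edgesAt Sᶜ v) = G.degree v := by
  rw [← card_edgesAt_univ, ← card_filter_add_card_filter_not (s := edgesAt univ v) (· ∈ S)]
  congr 2 <;> ext e <;> simp [edgesAt, and_comm]

lemma degree_lineGraph [DecidableRel G.lineGraph.Adj] {u v : V} (huv : G.Adj u v) :
    G.lineGraph.degree ⟨s(u, v), huv⟩ = G.degree u + G.degree v - 2 := by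
  set e : G.edgeSet := ⟨s(u, v), huv⟩
  have card_at (w : V) : #(edgesAt {e} w) = if w ∈ (e : Sym2 V) then 1 else 0 := by
    rw [edgesAt, filter_singleton]
    split_ifs <;> rfl
  have hsplit (w : V) := card_edgesAt_add_card_edgesAt_compl {e} w
  rw [← G.lineGraph.ncard_incidenceSet_s16, ← coe_edgeBoundary_singleton, Set.ncard_coe_finset,
    card_edgeBoundary, card_interedges_lineGraph disjoint_compl_right, sum_eq_add u v huv.ne]
  · have hu := hsplit u
    have hv := hsplit v
    simp only [card_at, e, Sym2.mem_mk_left, Sym2.mem_mk_right, if_true] at hu hv ⊢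
    omega
  · intro w _ hw
    simp [card_at, e, hw.1, hw.2]
  all_goals simp

end LineGraph

section CompleteGraph

variable [Fintype V] [DecidableEq V]

lemma forall_edgesAt_nonempty_or_forall_edgesAt_compl_nonempty [Nontrivial V]
    (S : Finset (⊤ : SimpleGraph V).edgeSet) :
    (∀ v, (edgesAt S v).Nonempty) ∨ ∀ v, (edgesAt Sᶜ v).Nonempty := by
  refine or_iff_not_imp_left.2 fun h => ?_
  obtain ⟨w, hw⟩ := not_forall.1 h
  have hcompl (z : V) (hz : z ≠ w) : (edgesAt Sᶜ z).Nonempty ∧ (edgesAt Sᶜ w).Nonempty := by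
    have hzw : (⊤ : SimpleGraph V).Adj z w := hz
    have hmem : (⟨s(z, w), hzw⟩ : (⊤ : SimpleGraph V).edgeSet) ∈ Sᶜ :=
      mem_compl.2 fun hS => hw ⟨_, mem_filter.2 ⟨hS, Sym2.mem_mk_right _ _⟩⟩
    exact ⟨⟨_, mem_filter.2 ⟨hmem, Sym2.mem_mk_left _ _⟩⟩,
      ⟨_, mem_filter.2 ⟨hmem, Sym2.mem_mk_right _ _⟩⟩⟩
  intro v
  obtain rfl | hvw := eq_or_ne v w
  · obtain ⟨z, hz⟩ := exists_ne v
    exact (hcompl z hz).2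
  · exact (hcompl v hvw).1

lemma three_le_card_filter_edgesAt_nonempty (S : Finset (⊤ : SimpleGraph V).edgeSet)
    (hS : 2 ≤ #S) (hSc : 2 ≤ #Sᶜ) :
    3 ≤ #{v | (edgesAt S v).Nonempty ∧ (edgesAt Sᶜ v).Nonempty} := by
  have key (T : Finset (⊤ : SimpleGraph V).edgeSet) (hT : 2 ≤ #T)
      (hall : ∀ v, (edgesAt Tᶜ v).Nonempty) :
      3 ≤ #{v | (edgesAt T v).Nonempty ∧ (edgesAt Tᶜ v).Nonempty} := by
    obtain ⟨e, he, f, hf, hef⟩ := one_lt_card.1 hT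
    have hends {g} (hg : g ∈ T) (v : V) (hv : v ∈ (g : Sym2 V)) :
        v ∈ ({v | (edgesAt T v).Nonempty ∧ (edgesAt Tᶜ v).Nonempty} : Finset V) :=
      mem_filter.2 ⟨mem_univ v, ⟨g, mem_filter.2 ⟨hg, hv⟩⟩, hall v⟩
    exact three_le_card_of_ne hef (hends he) (hends hf)
  obtain ⟨⟨⟨a, b⟩, hab⟩, -⟩ := card_pos.1 (by omega : 0 < #S)
  have : Nontrivial V := nontrivial_of_ne a b hab
  rcases forall_edgesAt_nonempty_or_forall_edgesAt_compl_nonempty S with h | h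
  · simpa only [compl_compl, and_comm] using key Sᶜ hSc (by simpa only [compl_compl] using h)
  · exact key S hS h

lemma lt_card_edgeBoundary_lineGraph_top [DecidableRel (⊤ : SimpleGraph V).lineGraph.Adj]
    (S : Finset (⊤ : SimpleGraph V).edgeSet) (hS : 2 ≤ #S) (hSc : 2 ≤ #Sᶜ) :
    2 * Fintype.card V - 4 < #(edgeBoundary (⊤ : SimpleGraph V).lineGraph S) := by
  set P : Finset V := {v | (edgesAt S v).Nonempty ∧ (edgesAt Sᶜ v).Nonempty}
  have hP : 3 ≤ #P := three_le_card_filter_edgesAt_nonempty S hS hSc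
  have hV : 3 ≤ Fintype.card V := hP.trans (card_le_univ P)
  have hterm (v : V) (hv : v ∈ P) :
      Fintype.card V - 2 ≤ #(edgesAt S v) * #(edgesAt Sᶜ v) := by
    have hsum := card_edgesAt_add_card_edgesAt_compl S v
    rw [complete_graph_degree] at hsum
    obtain ⟨hSv, hSv'⟩ := (mem_filter.1 hv).2
    have : #(edgesAt S v) + #(edgesAt Sᶜ v) ≤ #(edgesAt S v) * #(edgesAt Sᶜ v) + 1 := by
      nlinarith [hSv.card_pos, hSv'.card_pos]
    omega
  rw [card_edgeBoundary, card_interedges_lineGraph disjoint_compl_right]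
  calc 2 * Fintype.card V - 4 < 3 * (Fintype.card V - 2) := by omega
    _ ≤ #P * (Fintype.card V - 2) := Nat.mul_le_mul_right _ hP
    _ = ∑ v ∈ P, (Fintype.card V - 2) := by rw [sum_const, smul_eq_mul]
    _ ≤ ∑ v ∈ P, #(edgesAt S v) * #(edgesAt Sᶜ v) := sum_le_sum hterm
    _ ≤ ∑ v, #(edgesAt S v) * #(edgesAt Sᶜ v) := sum_le_sum_of_subset (subset_univ P)

lemma isRegularOfDegree_lineGraph_top [DecidableRel (⊤ : SimpleGraph V).lineGraph.Adj] :
    (⊤ : SimpleGraph V).lineGraph.IsRegularOfDegree (2 * Fintype.card V - 4) := by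
  rintro ⟨⟨u, v⟩, huv⟩
  rw [degree_lineGraph huv, complete_graph_degree, complete_graph_degree]
  omega

end CompleteGraph

end SimpleGraph

open scoped Classical in
theorem lineGraph_complete_superLambda (n : ℕ) (hn : 3 ≤ n) :
    (⊤ : SimpleGraph (Fin n)).lineGraph.IsRegularOfDegree (2 * n - 4) ∧
      IsSuperLambda (⊤ : SimpleGraph (Fin n)).lineGraph ∧
      Nonempty (mincutGraph (⊤ : SimpleGraph (Fin n)).lineGraph
        ≃g (⊤ : SimpleGraph (Fin n)).lineGraph) := by
  have hreg : (⊤ : SimpleGraph (Fin n)).lineGraph.IsRegularOfDegree (2 * n - 4) := by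
    simpa using isRegularOfDegree_lineGraph_top (V := Fin n)
  have hbd (S : Finset (⊤ : SimpleGraph (Fin n)).edgeSet) (hS : 2 ≤ #S) (hSc : 2 ≤ #Sᶜ) :
      2 * n - 4 < #(edgeBoundary (⊤ : SimpleGraph (Fin n)).lineGraph S) := by
    simpa using lt_card_edgeBoundary_lineGraph_top S hS hSc
  have : Nontrivial (⊤ : SimpleGraph (Fin n)).edgeSet := by
    let e : (⊤ : SimpleGraph (Fin n)).edgeSet := ⟨s(⟨0, by omega⟩, ⟨1, by omega⟩), by simp⟩
    obtain ⟨f, hef⟩ := (degree_pos_iff_exists_adj _ e).1 (by rw [hreg.degree_eq]; omega)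
    exact nontrivial_of_ne e f hef.ne
  exact ⟨hreg, isSuperLambda hreg hbd, ⟨(mincutGraphIso hreg (by omega) hbd).symm⟩⟩
end
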